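/- arXiv:0907.4894 — 5 statements merged into one kernel-verified Lean document; each statement's English description precedes it below -/
import Mathlib

section
/- The arithmetic function b₂, where b₂(n) is the number of primitive Dirichlet characters χ modulo n (with complex values) satisfying χ² = 1, is multiplicative, and its values on prime powers are: b₂(2) = 0, b₂(4) = 1, b₂(8) = 2, b₂(2^r) = 0 for all r ≥ 4, and for every odd prime p, b₂(p) = 1 and b₂(p^r) = 0 for all r ≥ 2. -/
/-- `b₂ n` is the number of primitive Dirichlet characters `χ` modulo `n` with values in `ℂ`
satisfying `χ ^ 2 = 1`. -/
noncomputable def b₂ (n : ℕ) : ℕ :=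
  Nat.card {χ : DirichletCharacter ℂ n // χ.IsPrimitive ∧ χ ^ 2 = 1}

/-!
Every Dirichlet character modulo `n` is induced by a unique primitive character, whose level is
its conductor `d ∣ n`, and it squares to `1` exactly when that primitive character does. Hence
`∑ d ∣ n, b₂ d` counts the characters modulo `n` with `χ ^ 2 = 1`, which by duality for the finite
abelian group `(ZMod n)ˣ` is the number of solutions of `x ^ 2 = 1` in `ZMod n`. That number is
multiplicative by the Chinese remainder theorem, so Möbius inversion makes `b₂` multiplicative.
It is `2` modulo an odd prime power and `4` modulo `2 ^ r` for `r ≥ 3` (the solutions being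
`±1` and `±1 + 2 ^ (r - 1)`), and the values of `b₂` at prime powers are its successive
differences.
-/

open DirichletCharacter

lemma Units.card_pow_eq_one (M : Type*) [Monoid M] {k : ℕ} (hk : k ≠ 0) :
    Nat.card {u : Mˣ // u ^ k = 1} = Nat.card {x : M // x ^ k = 1} :=
  Nat.card_congr <| Equiv.ofBijective
    (fun u => ⟨u.1, by rw [← Units.val_pow_eq_pow_val, u.2, Units.val_one]⟩)
    ⟨fun u v h => Subtype.ext (Units.ext (congrArg Subtype.val h)),
      fun x => ⟨⟨(IsUnit.of_pow_eq_one x.2 hk).unit, Units.ext x.2⟩, rfl⟩⟩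

namespace DirichletCharacter

lemma card_conductor_eq_pow_eq_one {R : Type*} [CommMonoidWithZero R] {n d : ℕ} [NeZero n]
    (h : d ∣ n) (k : ℕ) :
    Nat.card {χ : DirichletCharacter R n // χ.conductor = d ∧ χ ^ k = 1} =
      Nat.card {ψ : DirichletCharacter R d // ψ.IsPrimitive ∧ ψ ^ k = 1} := by
  refine (Nat.card_congr (Equiv.ofBijective
    (fun ψ => ⟨changeLevel h ψ.1, by rw [conductor_changeLevel, ψ.2.1],
      by rw [← map_pow, ψ.2.2, map_one]⟩) ⟨fun ψ ψ' e => ?_, ?_⟩)).symm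
  · exact Subtype.ext (changeLevel_injective h (congrArg Subtype.val e))
  · rintro ⟨χ, hχ, hχk⟩
    obtain ⟨-, ψ, rfl⟩ : χ.FactorsThrough d := hχ ▸ χ.factorsThrough_conductor
    refine ⟨⟨ψ, ?_, changeLevel_injective h ?_⟩, rfl⟩
    · rwa [isPrimitive_def, ← conductor_changeLevel _ h]
    · rw [map_pow, hχk, map_one]

lemma card_pow_eq_one_eq_sum_divisors {R : Type*} [CommRing R] [IsDomain R] (n k : ℕ)
    [NeZero n] :
    Nat.card {χ : DirichletCharacter R n // χ ^ k = 1} =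
      ∑ d ∈ n.divisors, Nat.card {ψ : DirichletCharacter R d // ψ.IsPrimitive ∧ ψ ^ k = 1} := by
  classical
  rw [Nat.card_eq_fintype_card, Fintype.card_subtype, Finset.card_eq_sum_card_fiberwise
    (f := conductor) (t := n.divisors)
    (fun χ _ => Nat.mem_divisors.mpr ⟨conductor_dvd_level χ, NeZero.ne n⟩)]
  refine Finset.sum_congr rfl fun d hd => ?_
  rw [← card_conductor_eq_pow_eq_one (Nat.dvd_of_mem_divisors hd), Nat.card_eq_fintype_card,
    Fintype.card_subtype, Finset.filter_filter]
  simp only [and_comm]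

lemma card_pow_eq_one_eq_card_zmod (R : Type*) [CommRing R] (n : ℕ) [NeZero n]
    [HasEnoughRootsOfUnity R (Monoid.exponent (ZMod n)ˣ)] {k : ℕ} (hk : k ≠ 0) :
    Nat.card {χ : DirichletCharacter R n // χ ^ k = 1} = Nat.card {x : ZMod n // x ^ k = 1} := by
  obtain ⟨e⟩ := mulEquiv_units R n
  rw [← Units.card_pow_eq_one (ZMod n) hk]
  exact Nat.card_congr ((e : DirichletCharacter R n ≃ (ZMod n)ˣ).subtypeEquiv fun χ => by
    rw [EquivLike.coe_coe, ← map_pow, MulEquiv.map_eq_one_iff])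

end DirichletCharacter

lemma Int.two_pow_dvd_sub_one_or_add_one_of_dvd_sq_sub_one {y : ℤ} {r : ℕ}
    (h : 2 ^ (r + 2) ∣ y ^ 2 - 1) : 2 ^ (r + 1) ∣ y - 1 ∨ 2 ^ (r + 1) ∣ y + 1 := by
  obtain ⟨k, rfl | rfl⟩ := y.even_or_odd'
  · rw [show (2 * k) ^ 2 - 1 = 2 * (2 * k ^ 2 - 1) + 1 by ring] at h
    have h2 := (Int.dvd_add_right (dvd_mul_right 2 _)).mp ((dvd_pow_self 2 (by omega)).trans h)
    exact absurd h2 (by norm_num)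
  -- `y ^ 2 - 1 = 4 * k * (k + 1)` and one of `k`, `k + 1` is odd
  rw [show (2 * k + 1) ^ 2 - 1 = 4 * (k * (k + 1)) by ring, pow_add, mul_comm,
    show (2 : ℤ) ^ 2 = 4 by norm_num] at h
  have hk := (mul_dvd_mul_iff_left (by norm_num : (4 : ℤ) ≠ 0)).mp h
  rw [add_sub_cancel_right, show 2 * k + 1 + 1 = 2 * (k + 1) by ring, pow_succ']
  by_cases hk2 : (2 : ℤ) ∣ k
  · exact Or.inl (mul_dvd_mul_left 2 (Int.prime_two.pow_dvd_of_dvd_mul_right r (by omega) hk))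
  · exact Or.inr (mul_dvd_mul_left 2 (Int.prime_two.pow_dvd_of_dvd_mul_left r hk2 hk))

namespace ZMod

lemma card_pow_eq_one_mod_one (k : ℕ) : Nat.card {x : ZMod 1 // x ^ k = 1} = 1 :=
  Nat.card_eq_one_iff_unique.mpr ⟨inferInstance, ⟨⟨1, one_pow k⟩⟩⟩

lemma card_pow_eq_one_mul {m n : ℕ} (h : m.Coprime n) (k : ℕ) :
    Nat.card {x : ZMod (m * n) // x ^ k = 1} =
      Nat.card {x : ZMod m // x ^ k = 1} * Nat.card {x : ZMod n // x ^ k = 1} := by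
  let e := ZMod.chineseRemainder h
  rw [← Nat.card_prod, Nat.card_congr ((e.toEquiv.subtypeEquiv fun x => ?_).trans
    (Equiv.subtypeProdEquivProd (p := fun a => a ^ k = 1) (q := fun b => b ^ k = 1)))]
  rw [← map_eq_one_iff _ e.injective, map_pow, Prod.ext_iff]
  rfl

lemma sq_eq_one_iff_of_odd_prime_pow {p r : ℕ} (hp : p.Prime) (hp2 : p ≠ 2) {x : ZMod (p ^ r)} :
    x ^ 2 = 1 ↔ x = 1 ∨ x = -1 := by
  refine ⟨fun hx => ?_, by rintro (rfl | rfl) <;> ring⟩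
  obtain ⟨y, rfl⟩ := intCast_surjective x
  have hp' : Prime (p : ℤ) := Nat.prime_iff_prime_int.mp hp
  have hdvd : (p : ℤ) ^ r ∣ (y - 1) * (y + 1) := by
    have := (intCast_eq_intCast_iff_dvd_sub 1 (y ^ 2) (p ^ r)).mp (by push_cast; exact hx.symm)
    convert this using 1 <;> push_cast <;> ring
  -- `p` cannot divide both factors, since it would then divide their difference `2`
  have hboth : ¬ ((p : ℤ) ∣ y - 1 ∧ (p : ℤ) ∣ y + 1) := fun ⟨h₁, h₂⟩ =>
    hp2 ((Nat.prime_dvd_prime_iff_eq hp Nat.prime_two).mp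
      (by exact_mod_cast (by simpa using dvd_sub h₂ h₁ : (p : ℤ) ∣ 2)))
  by_cases h : (p : ℤ) ∣ y + 1
  · have := (intCast_zmod_eq_zero_iff_dvd (y + 1) (p ^ r)).mpr
      (by exact_mod_cast hp'.pow_dvd_of_dvd_mul_left r (fun h' => hboth ⟨h', h⟩) hdvd)
    push_cast at this
    exact Or.inr (by linear_combination this)
  · have := (intCast_zmod_eq_zero_iff_dvd (y - 1) (p ^ r)).mpr
      (by exact_mod_cast hp'.pow_dvd_of_dvd_mul_right r h hdvd)
    push_cast at this
    exact Or.inl (by linear_combination this)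

lemma card_sq_eq_one_of_odd_prime_pow {p r : ℕ} (hp : p.Prime) (hp2 : p ≠ 2) (hr : r ≠ 0) :
    Nat.card {x : ZMod (p ^ r) // x ^ 2 = 1} = 2 := by
  have : Fact (2 < p ^ r) := ⟨(hp.two_le.lt_of_ne' hp2).trans_le (Nat.le_self_pow hr p)⟩
  calc Nat.card {x : ZMod (p ^ r) // x ^ 2 = 1}
      = Nat.card ({1, -1} : Finset (ZMod (p ^ r))) :=
        Nat.card_congr (Equiv.subtypeEquivRight fun x => by
          rw [sq_eq_one_iff_of_odd_prime_pow hp hp2, Finset.mem_insert, Finset.mem_singleton])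
    _ = 2 := by rw [Nat.card_eq_finsetCard, Finset.card_pair neg_one_ne_one.symm]

lemma two_mul_two_pow_eq_zero {r : ℕ} : (2 : ZMod (2 ^ (r + 1))) * 2 ^ r = 0 := by
  have := natCast_self (2 ^ (r + 1))
  push_cast at this
  linear_combination this

lemma two_pow_mul_intCast_eq_zero_or_self {r : ℕ} (t : ℤ) :
    (2 : ZMod (2 ^ (r + 1))) ^ r * t = 0 ∨ (2 : ZMod (2 ^ (r + 1))) ^ r * t = 2 ^ r := by
  obtain ⟨s, rfl | rfl⟩ := t.even_or_odd'
  · left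
    push_cast
    linear_combination (s : ZMod (2 ^ (r + 1))) * two_mul_two_pow_eq_zero
  · right
    push_cast
    linear_combination (s : ZMod (2 ^ (r + 1))) * two_mul_two_pow_eq_zero

lemma sq_eq_one_iff_of_two_pow {r : ℕ} {x : ZMod (2 ^ (r + 3))} :
    x ^ 2 = 1 ↔ x = 1 ∨ x = -1 ∨ x = 1 + 2 ^ (r + 2) ∨ x = -1 + 2 ^ (r + 2) := by
  have h2c : (2 : ZMod (2 ^ (r + 3))) * 2 ^ (r + 2) = 0 := two_mul_two_pow_eq_zero
  refine ⟨fun hx => ?_, ?_⟩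
  · obtain ⟨y, rfl⟩ := intCast_surjective x
    have hdvd : (2 : ℤ) ^ (r + 3) ∣ y ^ 2 - 1 := by
      have := (intCast_eq_intCast_iff_dvd_sub 1 (y ^ 2) (2 ^ (r + 3))).mp
        (by push_cast; exact hx.symm)
      exact_mod_cast this
    rcases Int.two_pow_dvd_sub_one_or_add_one_of_dvd_sq_sub_one hdvd with ⟨t, ht⟩ | ⟨t, ht⟩
    · have hy : (y : ZMod (2 ^ (r + 3))) = 1 + 2 ^ (r + 2) * t := by
        rw [← sub_eq_iff_eq_add']
        exact_mod_cast congrArg (Int.cast : ℤ → ZMod (2 ^ (r + 3))) ht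
      rcases two_pow_mul_intCast_eq_zero_or_self t with h | h <;> rw [hy, h] <;> simp
    · have hy : (y : ZMod (2 ^ (r + 3))) = -1 + 2 ^ (r + 2) * t := by
        rw [eq_neg_add_iff_add_eq, add_comm (1 : ZMod (2 ^ (r + 3)))]
        exact_mod_cast congrArg (Int.cast : ℤ → ZMod (2 ^ (r + 3))) ht
      rcases two_pow_mul_intCast_eq_zero_or_self t with h | h <;> rw [hy, h] <;> simp
  · rintro (rfl | rfl | rfl | rfl)
    · ring
    · ring
    · linear_combination (1 + (2 : ZMod (2 ^ (r + 3))) ^ (r + 1)) * h2c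
    · linear_combination (-1 + (2 : ZMod (2 ^ (r + 3))) ^ (r + 1)) * h2c

lemma card_sq_eq_one_of_two_pow {r : ℕ} (hr : 3 ≤ r) : Nat.card {x : ZMod (2 ^ r) // x ^ 2 = 1} = 4 := by
  obtain ⟨r, rfl⟩ : ∃ s, r = s + 3 := ⟨r - 3, by omega⟩
  set c : ZMod (2 ^ (r + 3)) := 2 ^ (r + 2)
  have hN : 2 ^ (r + 3) = 2 * 2 ^ (r + 2) := pow_succ' 2 (r + 2)
  have h4 : 2 ^ 2 ≤ 2 ^ (r + 2) := Nat.pow_le_pow_right (by norm_num) (by omega)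
  have hne (a : ℕ) (h₀ : 0 < a) (h₁ : a < 2 * 2 ^ (r + 2)) : (a : ZMod (2 ^ (r + 3))) ≠ 0 :=
    fun h => Nat.not_dvd_of_pos_of_lt h₀ (hN ▸ h₁) ((natCast_eq_zero_iff _ _).mp h)
  have h2 : (2 : ZMod (2 ^ (r + 3))) ≠ 0 := by exact_mod_cast hne 2 (by omega) (by omega)
  have hc : c ≠ 0 := by simpa using hne (2 ^ (r + 2)) (by omega) (by omega)
  have hc_sub : c - 2 ≠ 0 := by
    have := hne (2 ^ (r + 2) - 2) (by omega) (by omega)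
    rwa [Nat.cast_sub (by omega), Nat.cast_pow, Nat.cast_ofNat] at this
  have hc_add : c + 2 ≠ 0 := by simpa using hne (2 ^ (r + 2) + 2) (by omega) (by omega)
  calc Nat.card {x : ZMod (2 ^ (r + 3)) // x ^ 2 = 1}
      = Nat.card ({1, -1, 1 + c, -1 + c} : Finset (ZMod (2 ^ (r + 3)))) :=
        Nat.card_congr (Equiv.subtypeEquivRight fun x => by
          simp only [sq_eq_one_iff_of_two_pow, Finset.mem_insert, Finset.mem_singleton, c])
    _ = 4 := by
      rw [Nat.card_eq_finsetCard, Finset.card_insert_of_notMem, Finset.card_insert_of_notMem,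
        Finset.card_pair]
      · exact fun h => h2 (by linear_combination h)
      · simp only [Finset.mem_insert, Finset.mem_singleton, not_or]
        exact ⟨fun h => hc_add (by linear_combination -h), fun h => hc (by linear_combination -h)⟩
      · simp only [Finset.mem_insert, Finset.mem_singleton, not_or]
        exact ⟨fun h => h2 (by linear_combination h), fun h => hc (by linear_combination -h),
          fun h => hc_sub (by linear_combination -h)⟩

end ZMod

open ArithmeticFunction ArithmeticFunction.zeta in
theorem ArithmeticFunction.IsMultiplicative.of_mul_zeta {R : Type*} [CommRing R]
    {f : ArithmeticFunction R} (h : (f * ζ).IsMultiplicative) : f.IsMultiplicative := by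
  rw [← mul_one f, ← coe_zeta_mul_coe_moebius, ← mul_assoc]
  exact h.mul isMultiplicative_moebius.intCast

lemma sum_divisors_b₂ {n : ℕ} (hn : n ≠ 0) :
    ∑ d ∈ n.divisors, b₂ d = Nat.card {x : ZMod n // x ^ 2 = 1} := by
  have : NeZero n := ⟨hn⟩
  rw [← card_pow_eq_one_eq_card_zmod ℂ n two_ne_zero, card_pow_eq_one_eq_sum_divisors]
  rfl

lemma b₂_one : b₂ 1 = 1 := by
  have := sum_divisors_b₂ one_ne_zero
  rwa [Nat.divisors_one, Finset.sum_singleton, ZMod.card_pow_eq_one_mod_one] at this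

open ArithmeticFunction ArithmeticFunction.zeta in
lemma b₂_mul {m n : ℕ} (h : m.Coprime n) : b₂ (m * n) = b₂ m * b₂ n := by
  rcases eq_or_ne m 0 with rfl | hm
  · rw [(Nat.coprime_zero_left n).mp h, mul_one, b₂_one, mul_one]
  rcases eq_or_ne n 0 with rfl | hn
  · rw [(Nat.coprime_zero_right m).mp h, one_mul, b₂_one, one_mul]
  let F : ArithmeticFunction ℤ := ⟨fun k => if k = 0 then 0 else b₂ k, if_pos rfl⟩
  have hF {k : ℕ} (hk : k ≠ 0) : F k = b₂ k := if_neg hk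
  have hFζ {k : ℕ} (hk : k ≠ 0) : (F * ζ) k = Nat.card {x : ZMod k // x ^ 2 = 1} := by
    rw [coe_mul_zeta_apply, ← sum_divisors_b₂ hk, Nat.cast_sum]
    exact Finset.sum_congr rfl fun d hd => hF (Nat.pos_of_mem_divisors hd).ne'
  have hFζ_mult : (F * ζ).IsMultiplicative := IsMultiplicative.iff_ne_zero.mpr
    ⟨by rw [hFζ one_ne_zero, ZMod.card_pow_eq_one_mod_one, Nat.cast_one], fun ha hb hab => by
      rw [hFζ (mul_ne_zero ha hb), hFζ ha, hFζ hb, ZMod.card_pow_eq_one_mul hab, Nat.cast_mul]⟩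
  have := hFζ_mult.of_mul_zeta.map_mul_of_coprime h
  rw [hF (mul_ne_zero hm hn), hF hm, hF hn] at this
  exact_mod_cast this

lemma card_sq_eq_one_add_b₂_prime_pow_succ {p : ℕ} (hp : p.Prime) (r : ℕ) :
    Nat.card {x : ZMod (p ^ r) // x ^ 2 = 1} + b₂ (p ^ (r + 1)) =
      Nat.card {x : ZMod (p ^ (r + 1)) // x ^ 2 = 1} := by
  rw [← sum_divisors_b₂ (pow_ne_zero _ hp.ne_zero), ← sum_divisors_b₂ (pow_ne_zero _ hp.ne_zero),
    Nat.sum_divisors_prime_pow hp, Nat.sum_divisors_prime_pow hp, Finset.sum_range_succ _ (r + 1)]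

theorem b₂_multiplicative_and_values :
    b₂ 1 = 1 ∧
    (∀ m n : ℕ, Nat.Coprime m n → b₂ (m * n) = b₂ m * b₂ n) ∧
    b₂ 2 = 0 ∧
    b₂ 4 = 1 ∧
    b₂ 8 = 2 ∧
    (∀ r : ℕ, 4 ≤ r → b₂ (2 ^ r) = 0) ∧
    (∀ p : ℕ, p.Prime → p ≠ 2 →
      b₂ p = 1 ∧ (∀ r : ℕ, 2 ≤ r → b₂ (p ^ r) = 0)) := by
  have h₂ := card_sq_eq_one_add_b₂_prime_pow_succ Nat.prime_two
  have T1 : Nat.card {x : ZMod 1 // x ^ 2 = 1} = 1 := ZMod.card_pow_eq_one_mod_one 2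
  have T2 : Nat.card {x : ZMod 2 // x ^ 2 = 1} = 1 := by rw [Nat.card_eq_fintype_card]; decide
  have T4 : Nat.card {x : ZMod 4 // x ^ 2 = 1} = 2 := by rw [Nat.card_eq_fintype_card]; decide
  have T8 : Nat.card {x : ZMod 8 // x ^ 2 = 1} = 4 := by rw [Nat.card_eq_fintype_card]; decide
  refine ⟨b₂_one, fun m n => b₂_mul, ?_, ?_, ?_, fun r hr => ?_, fun p hp hp2 => ⟨?_, fun r hr => ?_⟩⟩
  · have := h₂ 0; simp only [Nat.reducePow, Nat.reduceAdd, T1, T2] at this; omega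
  · have := h₂ 1; simp only [Nat.reducePow, Nat.reduceAdd, T2, T4] at this; omega
  · have := h₂ 2; simp only [Nat.reducePow, Nat.reduceAdd, T4, T8] at this; omega
  · obtain ⟨s, rfl⟩ : ∃ s, r = s + 1 := ⟨r - 1, by omega⟩
    have := h₂ s
    rw [ZMod.card_sq_eq_one_of_two_pow (by omega), ZMod.card_sq_eq_one_of_two_pow (by omega)] at this
    omega
  · have Tp := ZMod.card_sq_eq_one_of_odd_prime_pow hp hp2 one_ne_zero
    have := card_sq_eq_one_add_b₂_prime_pow_succ hp 0
    rw [pow_one] at Tp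
    rw [pow_zero, zero_add, pow_one, T1, Tp] at this
    omega
  · obtain ⟨s, rfl⟩ : ∃ s, r = s + 1 := ⟨r - 1, by omega⟩
    have := card_sq_eq_one_add_b₂_prime_pow_succ hp s
    rw [ZMod.card_sq_eq_one_of_odd_prime_pow hp hp2 (by omega),
      ZMod.card_sq_eq_one_of_odd_prime_pow hp hp2 (by omega)] at this
    omega
end

section
/- The arithmetic function b₃, where b₃(n) is the number of primitive Dirichlet characters χ modulo n (with complex values) satisfying χ³ = 1, is multiplicative, and its values on prime powers are: b₃(2^r) = 0 for all r ≥ 1; b₃(9) = 2 and b₃(3^r) = 0 for r = 1 and r ≥ 3; and for every prime p ≥ 5 and every r ≥ 1, b₃(p^r) = 2 if r = 1 and p ≡ 1 (mod 3), and b₃(p^r) = 0 otherwise. -/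
/-- `b₃ n` is the number of primitive Dirichlet characters `χ` modulo `n` with values in `ℂ`
satisfying `χ ^ 3 = 1`. -/
noncomputable def b₃ (n : ℕ) : ℕ :=
  Nat.card {χ : DirichletCharacter ℂ n // χ.IsPrimitive ∧ χ ^ 3 = 1}

/-!
For coprime `m`, `n`, lifting a pair of characters of levels `m`, `n` to level `m * n` and
multiplying them is an isomorphism (injective by `factorsThrough_gcd`, then count), and the
conductors multiply, since the conductor of a product divides the lcm of the conductors. So both
primitivity and `χ ^ 3 = 1` split along the isomorphism, and `b₃` is multiplicative.

A character with `χ ^ 3 = 1` is trivial on cubes. If every unit mod `n` that is `≡ 1` modulo a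
proper divisor `d` is a cube, such a character factors through `d` and is not primitive. This
holds for `p ^ r` with `p ≠ 3`, `r ≥ 2`, `d = p`, where these units have `p`-power order, and for
`3 ^ r` with `r ≥ 3`, `d = 9`, by Hensel lifting. If `3 ∤ φ(n)`, only the trivial character has
`χ ^ 3 = 1`. For `n = p ≡ 1 (mod 3)` and `n = 9` the unit group is cyclic of order divisible
by `3`, so there are three characters with `χ ^ 3 = 1`; the two nontrivial ones are primitive
because no proper divisor `d` of `n` has `3 ∣ φ(d)`.
-/

theorem ZMod.natCast_dvd_sub_one_of_mem_ker_unitsMap {d n : ℕ} [NeZero n] {hd : d ∣ n}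
    {u : (ZMod n)ˣ} (hu : u ∈ (ZMod.unitsMap hd).ker) : (d : ZMod n) ∣ (u : ZMod n) - 1 := by
  have hval : ((((u : ZMod n) - 1).val : ℕ) : ZMod d) = 0 := by
    rw [ZMod.natCast_val, ← ZMod.castHom_apply (h := hd), map_sub, map_one,
      ZMod.castHom_apply (h := hd), ← ZMod.unitsMap_val hd, MonoidHom.mem_ker.mp hu,
      Units.val_one, sub_self]
  obtain ⟨c, hc⟩ := (ZMod.natCast_eq_zero_iff _ _).mp hval
  exact ⟨c, by rw [← ZMod.natCast_zmod_val ((u : ZMod n) - 1), hc, Nat.cast_mul]⟩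

theorem ZMod.pow_prime_pow_eq_one_of_mem_ker_unitsMap {p r : ℕ} [NeZero (p ^ (r + 1))]
    {hp : p ∣ p ^ (r + 1)} {u : (ZMod (p ^ (r + 1)))ˣ} (hu : u ∈ (ZMod.unitsMap hp).ker) :
    u ^ p ^ r = 1 := by
  have h := dvd_sub_pow_of_dvd_sub (ZMod.natCast_dvd_sub_one_of_mem_ker_unitsMap hu) r
  rw [← Nat.cast_pow, ZMod.natCast_self, zero_dvd_iff, one_pow, sub_eq_zero] at h
  exact Units.ext (by rw [Units.val_pow_eq_pow_val, h, Units.val_one])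

theorem exists_pow_three_dvd_sub_of_nine_dvd_sub_one {R : Type*} [CommRing R] {x : R}
    (hx : 9 ∣ x - 1) (k : ℕ) : ∃ y, 3 ∣ y - 1 ∧ 3 ^ k ∣ x - y ^ 3 := by
  induction k with
  | zero => exact ⟨1, by simp, by simp⟩
  | succ k ih =>
    rcases Nat.lt_or_ge k 2 with hk | hk
    · refine ⟨1, by simp, ?_⟩
      rw [one_pow]
      exact (pow_dvd_pow 3 hk).trans (by norm_num [hx])
    obtain ⟨m, rfl⟩ := Nat.exists_eq_add_of_le' hk
    obtain ⟨y, ⟨c, hc⟩, t, ht⟩ := ih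
    -- Since `3 ∣ 1 - y ^ 2`, the linear term `3 ^ (m + 2) * t * y ^ 2` of the new cube cancels
    -- `x - y ^ 3 = 3 ^ (m + 2) * t` modulo `3 ^ (m + 3)`.
    obtain ⟨s, hs⟩ : (3 : R) ∣ 1 - y ^ 2 :=
      ⟨-(c * (y + 1)), by linear_combination (-(y + 1)) * hc⟩
    refine ⟨y + 3 ^ (m + 1) * t, ⟨c + 3 ^ m * t, by linear_combination hc⟩,
      t * s - 3 ^ m * y * t ^ 2 - 3 ^ (2 * m) * t ^ 3, ?_⟩
    linear_combination ht + (3 ^ (m + 2) * t) * hs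

theorem ZMod.exists_pow_three_eq_of_mem_ker_unitsMap {r : ℕ} {h : 9 ∣ 3 ^ r}
    {u : (ZMod (3 ^ r))ˣ} (hu : u ∈ (ZMod.unitsMap h).ker) : ∃ v, v ^ 3 = u := by
  obtain ⟨y, -, hy⟩ := exists_pow_three_dvd_sub_of_nine_dvd_sub_one
    (by exact_mod_cast ZMod.natCast_dvd_sub_one_of_mem_ker_unitsMap hu) r
  have h3 : (3 : ZMod (3 ^ r)) ^ r = 0 := by exact_mod_cast ZMod.natCast_self (3 ^ r)
  rw [h3, zero_dvd_iff, sub_eq_zero] at hy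
  have hyu : IsUnit y := (isUnit_pow_iff three_ne_zero).mp (hy ▸ u.isUnit)
  exact ⟨hyu.unit, Units.ext (by rw [Units.val_pow_eq_pow_val, IsUnit.unit_spec, hy])⟩

namespace DirichletCharacter

variable {R : Type*} [CommMonoidWithZero R] {n : ℕ}

theorem pow_totient_eq_one [NeZero n] (χ : DirichletCharacter R n) : χ ^ n.totient = 1 :=
  MulChar.ext fun u ↦ by rw [MulChar.pow_apply_coe, ← map_pow, ← Units.val_pow_eq_pow_val,
    ZMod.pow_totient, Units.val_one, MulChar.map_one, MulChar.one_apply_coe]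

theorem eq_one_of_pow_eq_one_of_coprime [NeZero n] {χ : DirichletCharacter R n} {k : ℕ}
    (hχ : χ ^ k = 1) (hk : k.Coprime n.totient) : χ = 1 := by
  simpa [hk] using pow_gcd_eq_one.mpr ⟨hχ, χ.pow_totient_eq_one⟩

theorem factorsThrough_of_pow_eq_one [NeZero n] {χ : DirichletCharacter R n} {k d : ℕ}
    (hχ : χ ^ k = 1) (hd : d ∣ n) (hpow : ∀ u ∈ (ZMod.unitsMap hd).ker, ∃ v, v ^ k = u) :
    χ.FactorsThrough d := by
  refine (factorsThrough_iff_ker_unitsMap hd).mpr fun u hu ↦ ?_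
  obtain ⟨v, rfl⟩ := hpow u hu
  rw [MonoidHom.mem_ker, map_pow, Units.ext_iff, Units.val_pow_eq_pow_val,
    MulChar.coe_toUnitHom, ← MulChar.pow_apply_coe, hχ, MulChar.one_apply_coe, Units.val_one]

theorem conductor_mul_of_coprime (χ ψ : DirichletCharacter R n)
    (h : χ.conductor.Coprime ψ.conductor) :
    (χ * ψ).conductor = χ.conductor * ψ.conductor := by
  refine (h.lcm_eq_mul ▸ conductor_mul_dvd_lcm_conductor χ ψ).antisymm
    (h.mul_dvd_of_dvd_of_dvd ?_ ?_)
  · have := conductor_mul_dvd_lcm_conductor (χ * ψ) ψ⁻¹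
    rw [mul_inv_cancel_right, conductor_inv] at this
    exact h.dvd_of_dvd_mul_right (this.trans (Nat.lcm_dvd_mul _ _))
  · have := conductor_mul_dvd_lcm_conductor (χ * ψ) χ⁻¹
    rw [mul_inv_cancel_comm, conductor_inv] at this
    exact h.symm.dvd_of_dvd_mul_right (this.trans (Nat.lcm_dvd_mul _ _))

theorem isPrimitive_iff_ne_one_of_pow_eq_one [NeZero n] (hn : n ≠ 1)
    {χ : DirichletCharacter R n} {k : ℕ} (hχ : χ ^ k = 1)
    (hk : ∀ d ∈ n.properDivisors, k.Coprime d.totient) :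
    χ.IsPrimitive ↔ χ ≠ 1 := by
  refine ⟨fun hprim h1 ↦ hn ?_, fun h1 ↦ by_contra fun hprim ↦ ?_⟩
  · rwa [IsPrimitive, h1, conductor_one, eq_comm] at hprim
  obtain ⟨hdvd, ψ, hψ⟩ := χ.factorsThrough_conductor
  have : NeZero χ.conductor := ⟨χ.conductor_ne_zero⟩
  have hψk : ψ ^ k = 1 := (changeLevel_eq_one_iff hdvd).mp (by rw [map_pow, ← hψ, hχ])
  have hproper : χ.conductor ∈ n.properDivisors :=
    Nat.mem_properDivisors.mpr ⟨hdvd, (Nat.le_of_dvd (NeZero.pos n) hdvd).lt_of_ne hprim⟩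
  rw [hψ, eq_one_of_pow_eq_one_of_coprime hψk (hk _ hproper), map_one] at h1
  exact h1 rfl

section Product

variable (R) (m n : ℕ)

noncomputable def changeLevelProd :
    DirichletCharacter R m × DirichletCharacter R n →* DirichletCharacter R (m * n) :=
  (changeLevel (dvd_mul_right m n)).coprod (changeLevel (dvd_mul_left n m))

variable {R m n}

theorem changeLevelProd_apply (ψ : DirichletCharacter R m × DirichletCharacter R n) :
    changeLevelProd R m n ψ =
      changeLevel (dvd_mul_right m n) ψ.1 * changeLevel (dvd_mul_left n m) ψ.2 :=
  rfl

theorem changeLevelProd_injective [NeZero m] [NeZero n] (h : m.Coprime n) :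
    Function.Injective (changeLevelProd R m n) := by
  refine (injective_iff_map_eq_one _).mpr fun ψ hψ ↦ ?_
  rw [changeLevelProd_apply, mul_eq_one_iff_eq_inv, ← map_inv] at hψ
  have h₁ : ψ.1 = 1 := by
    simpa [h.gcd_eq_one, factorsThrough_one_iff] using factorsThrough_gcd ψ.1 ψ.2⁻¹ hψ
  rw [h₁, map_one, eq_comm, changeLevel_eq_one_iff, inv_eq_one] at hψ
  exact Prod.ext h₁ hψ

theorem changeLevelProd_bijective [NeZero m] [NeZero n] (h : m.Coprime n) :
    Function.Bijective (changeLevelProd ℂ m n) := by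
  refine (changeLevelProd_injective h).bijective_of_nat_card_le ?_
  rw [Nat.card_prod, card_eq_totient_of_hasEnoughRootsOfUnity,
    card_eq_totient_of_hasEnoughRootsOfUnity, card_eq_totient_of_hasEnoughRootsOfUnity,
    Nat.totient_mul h]

theorem conductor_changeLevelProd [NeZero m] [NeZero n] (h : m.Coprime n)
    (ψ : DirichletCharacter R m × DirichletCharacter R n) :
    (changeLevelProd R m n ψ).conductor = ψ.1.conductor * ψ.2.conductor := by
  rw [changeLevelProd_apply, conductor_mul_of_coprime] <;>
    rw [conductor_changeLevel, conductor_changeLevel]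
  exact (h.coprime_dvd_left ψ.1.conductor_dvd_level).coprime_dvd_right ψ.2.conductor_dvd_level

theorem isPrimitive_changeLevelProd_iff [NeZero m] [NeZero n] (h : m.Coprime n)
    (ψ : DirichletCharacter R m × DirichletCharacter R n) :
    (changeLevelProd R m n ψ).IsPrimitive ↔ ψ.1.IsPrimitive ∧ ψ.2.IsPrimitive := by
  rw [IsPrimitive, conductor_changeLevelProd h]
  exact mul_eq_mul_iff_eq_and_eq_of_pos (Nat.le_of_dvd (NeZero.pos m) ψ.1.conductor_dvd_level)
    (Nat.le_of_dvd (NeZero.pos n) ψ.2.conductor_dvd_level)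
    (Nat.pos_of_ne_zero ψ.1.conductor_ne_zero) (NeZero.pos n)

end Product

theorem card_ker_powMonoidHom_of_isCyclic [NeZero n] [IsCyclic (ZMod n)ˣ] (k : ℕ) :
    Nat.card (powMonoidHom k : DirichletCharacter ℂ n →* _).ker = n.totient.gcd k := by
  obtain ⟨e⟩ := mulEquiv_units ℂ n
  have : IsCyclic (DirichletCharacter ℂ n) := isCyclic_of_surjective e.symm e.symm.surjective
  rw [IsCyclic.card_powMonoidHom_ker, card_eq_totient_of_hasEnoughRootsOfUnity]

end DirichletCharacter

open DirichletCharacter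

theorem b₃_one : b₃ 1 = 1 :=
  Nat.card_eq_one_iff_unique.mpr ⟨inferInstance, ⟨⟨1, isPrimitive_one_level_one, one_pow 3⟩⟩⟩

theorem b₃_mul {m n : ℕ} (h : m.Coprime n) : b₃ (m * n) = b₃ m * b₃ n := by
  rcases eq_or_ne m 0 with rfl | hm
  · simp [(Nat.coprime_zero_left n).mp h, b₃_one]
  rcases eq_or_ne n 0 with rfl | hn
  · simp [(Nat.coprime_zero_right m).mp h, b₃_one]
  have : NeZero m := ⟨hm⟩
  have : NeZero n := ⟨hn⟩
  let e := MulEquiv.ofBijective _ (changeLevelProd_bijective h)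
  rw [b₃, b₃, b₃, ← Nat.card_prod]
  refine Nat.card_congr ((e.toEquiv.subtypeEquiv fun ψ ↦ ?_).symm.trans Equiv.subtypeProdEquivProd)
  simp only [MulEquiv.toEquiv_eq_coe, EquivLike.coe_coe, MulEquiv.ofBijective_apply, e,
    isPrimitive_changeLevelProd_iff h, ← map_pow,
    (changeLevelProd_injective h).eq_iff' (map_one _), Prod.ext_iff, Prod.pow_fst, Prod.pow_snd,
    Prod.fst_one, Prod.snd_one]
  tauto

theorem b₃_eq_zero_of_factorsThrough {n d : ℕ} [NeZero n] (hd : d ∣ n) (hdn : d ≠ n)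
    (h : ∀ χ : DirichletCharacter ℂ n, χ ^ 3 = 1 → χ.FactorsThrough d) : b₃ n = 0 :=
  Nat.card_eq_zero.mpr <| .inl ⟨fun ⟨χ, hprim, hχ⟩ ↦ hdn <| Nat.dvd_antisymm hd <|
    hprim ▸ χ.conductor_dvd_of_mem_conductorSet (h χ hχ)⟩

theorem b₃_eq_zero_of_coprime_totient {n : ℕ} (hn : n ≠ 1) (h : Nat.Coprime 3 n.totient) :
    b₃ n = 0 := by
  have : NeZero n := ⟨by rintro rfl; simp at h⟩
  refine b₃_eq_zero_of_factorsThrough (one_dvd n) hn.symm fun χ hχ ↦ ?_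
  rw [factorsThrough_one_iff]
  exact eq_one_of_pow_eq_one_of_coprime hχ h

theorem b₃_prime_pow_eq_zero {p r : ℕ} (hp : p.Prime) (hp3 : p ≠ 3) (hr : 2 ≤ r) :
    b₃ (p ^ r) = 0 := by
  obtain ⟨r, rfl⟩ : ∃ s, r = s + 1 := ⟨r - 1, by omega⟩
  have : NeZero (p ^ (r + 1)) := ⟨pow_ne_zero _ hp.ne_zero⟩
  have hdvd : p ∣ p ^ (r + 1) := dvd_pow_self p r.succ_ne_zero
  have hcop : Nat.Coprime 3 (p ^ r) :=
    ((Nat.coprime_primes Nat.prime_three hp).mpr hp3.symm).pow_right r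
  refine b₃_eq_zero_of_factorsThrough hdvd ?_ fun χ hχ ↦
    factorsThrough_of_pow_eq_one hχ hdvd fun u hu ↦ ?_
  · exact (pow_one p ▸ Nat.pow_lt_pow_right hp.one_lt (by omega : 1 < r + 1)).ne
  · obtain ⟨k, hk⟩ := exists_pow_eq_self_of_coprime (hcop.coprime_dvd_right
      (orderOf_dvd_of_pow_eq_one (ZMod.pow_prime_pow_eq_one_of_mem_ker_unitsMap hu)))
    exact ⟨u ^ k, by rw [← pow_mul, mul_comm, pow_mul, hk]⟩

theorem b₃_three_pow_eq_zero {r : ℕ} (hr : 3 ≤ r) : b₃ (3 ^ r) = 0 := by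
  have : NeZero (3 ^ r) := ⟨pow_ne_zero _ three_ne_zero⟩
  have hlt : 9 < 3 ^ r := Nat.pow_lt_pow_right (by norm_num : 1 < 3) (by omega : 2 < r)
  have hdvd : 9 ∣ 3 ^ r := pow_dvd_pow 3 (by omega : 2 ≤ r)
  exact b₃_eq_zero_of_factorsThrough hdvd hlt.ne fun χ hχ ↦
    factorsThrough_of_pow_eq_one hχ hdvd fun u hu ↦ ZMod.exists_pow_three_eq_of_mem_ker_unitsMap hu

theorem b₃_add_one {n : ℕ} [NeZero n]
    (h : ∀ χ : DirichletCharacter ℂ n, χ ^ 3 = 1 → (χ.IsPrimitive ↔ χ ≠ 1)) :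
    b₃ n + 1 = Nat.card (powMonoidHom 3 : DirichletCharacter ℂ n →* _).ker := by
  have hset : ((powMonoidHom 3 : DirichletCharacter ℂ n →* _).ker : Set (DirichletCharacter ℂ n)) =
      insert 1 {χ | χ.IsPrimitive ∧ χ ^ 3 = 1} := by
    ext χ
    by_cases h1 : χ = 1
    · simp [h1]
    · simp [h1, and_iff_right_of_imp fun hχ ↦ (h χ hχ).mpr h1]
  rw [← SetLike.coe_sort_coe, hset, Nat.card_coe_set_eq,
    Set.ncard_insert_of_notMem (fun h1 ↦ (h 1 (one_pow 3)).mp h1.1 rfl), b₃, ← Nat.card_coe_set_eq]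
  rfl

theorem b₃_eq_two_of_isCyclic {n : ℕ} [NeZero n] [IsCyclic (ZMod n)ˣ] (hn : n ≠ 1)
    (h3 : 3 ∣ n.totient) (hd : ∀ d ∈ n.properDivisors, Nat.Coprime 3 d.totient) : b₃ n = 2 := by
  have := b₃_add_one fun χ hχ ↦ isPrimitive_iff_ne_one_of_pow_eq_one hn hχ hd
  rw [card_ker_powMonoidHom_of_isCyclic, Nat.gcd_eq_right h3] at this
  omega

theorem b₃_prime_of_mod_three_eq_one {p : ℕ} (hp : p.Prime) (h : p % 3 = 1) : b₃ p = 2 := by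
  have : NeZero p := ⟨hp.ne_zero⟩
  have : IsCyclic (ZMod p)ˣ := ZMod.isCyclic_units_prime hp
  refine b₃_eq_two_of_isCyclic hp.one_lt.ne' ?_ (by simp [hp.properDivisors])
  rw [Nat.totient_prime hp]
  omega

theorem b₃_prime_of_mod_three_ne_one {p : ℕ} (hp : p.Prime) (h : p % 3 ≠ 1) : b₃ p = 0 := by
  refine b₃_eq_zero_of_coprime_totient hp.one_lt.ne' ?_
  rw [Nat.totient_prime hp, Nat.Prime.coprime_iff_not_dvd Nat.prime_three]
  have := hp.two_le
  omega

theorem b₃_two_pow_eq_zero {r : ℕ} (hr : 1 ≤ r) : b₃ (2 ^ r) = 0 := by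
  refine b₃_eq_zero_of_coprime_totient (Nat.one_lt_two_pow (by omega)).ne' ?_
  rw [Nat.totient_prime_pow Nat.prime_two (by omega)]
  simpa using Nat.Coprime.pow_right (r - 1) (by norm_num : Nat.Coprime 3 2)

theorem b₃_nine : b₃ 9 = 2 := by
  have : IsCyclic (ZMod 9)ˣ := ZMod.isCyclic_units_of_prime_pow 3 Nat.prime_three (by norm_num) 2
  exact b₃_eq_two_of_isCyclic (by norm_num) (by decide) (by decide)

theorem b₃_multiplicative_and_values :
    b₃ 1 = 1 ∧
    (∀ m n : ℕ, Nat.Coprime m n → b₃ (m * n) = b₃ m * b₃ n) ∧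
    (∀ r : ℕ, 1 ≤ r → b₃ (2 ^ r) = 0) ∧
    b₃ 3 = 0 ∧
    b₃ 9 = 2 ∧
    (∀ r : ℕ, 3 ≤ r → b₃ (3 ^ r) = 0) ∧
    (∀ p : ℕ, p.Prime → 5 ≤ p →
      (p % 3 = 1 → b₃ p = 2) ∧
      (p % 3 ≠ 1 → b₃ p = 0) ∧
      (∀ r : ℕ, 2 ≤ r → b₃ (p ^ r) = 0)) :=
  ⟨b₃_one, fun m n ↦ b₃_mul, fun r ↦ b₃_two_pow_eq_zero,
    b₃_prime_of_mod_three_ne_one Nat.prime_three (by norm_num), b₃_nine,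
    fun r ↦ b₃_three_pow_eq_zero, fun p hp hp5 ↦ ⟨b₃_prime_of_mod_three_eq_one hp,
      b₃_prime_of_mod_three_ne_one hp, fun r ↦ b₃_prime_pow_eq_zero hp (by omega)⟩⟩
end

section
/- As real s → 1 from the right, (s - 1) · ∏_{p prime, p ≡ 1 (mod 4)} (1 - p^{-s})^{-2} converges to (1/π) · ∏_{p prime, p ≡ 1 (mod 4)} (1 - p^{-2})^{-1}. -/
/-!
Prime by prime, the Euler factors of `ζ(s) L(s, χ₄)` are `(1 - p^{-s})^{-2}` for `p ≡ 1 (mod 4)`,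
`(1 - p^{-2s})^{-1}` for `p ≡ 3 (mod 4)` and `(1 - 2^{-s})^{-1}` for `p = 2`. Hence
`∏_{p ≡ 1} (1 - p^{-s})^{-2} = ζ(s) L(s, χ₄) (1 - 2^{-s}) ∏_{p ≡ 3} (1 - p^{-2s})`.
As `s → 1⁺`, `(s - 1) ζ(s) → 1`, `L(s, χ₄) → π/4` (Leibniz's series, the alternating-series
remainder bound being uniform in `s`), `1 - 2^{-s} → 1/2`, and the product over `p ≡ 3` is
continuous at `2s = 2`. Splitting the Euler product of `ζ(2) = π²/6` over the same three classes
of primes turns `(π/8) ∏_{p ≡ 3} (1 - p^{-2})` into the claimed constant.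
-/

open Filter Topology

/-- The alternating-series remainder bound makes the partial sums converge uniformly in `a`. -/
theorem tendsto_tsum_alternating_of_le {α : Type*} {𝓕 : Filter α} {f : α → ℕ → ℝ}
    {g b : ℕ → ℝ} {ℓ : ℝ}
    (hf : ∀ᶠ a in 𝓕, Antitone (f a) ∧ Summable (f a) ∧ ∀ n, f a n ≤ b n)
    (hb : Tendsto b atTop (𝓝 0)) (hfg : ∀ n, Tendsto (f · n) 𝓕 (𝓝 (g n)))
    (hg : Tendsto (fun n ↦ ∑ i ∈ Finset.range n, (-1) ^ i * g i) atTop (𝓝 ℓ)) :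
    Tendsto (fun a ↦ ∑' n, (-1) ^ n * f a n) 𝓕 (𝓝 ℓ) := by
  refine TendstoUniformlyOnFilter.tendsto_of_eventually_tendsto
    (F := fun n a ↦ ∑ i ∈ Finset.range n, (-1) ^ i * f a i) ?_
    (Eventually.of_forall fun n ↦ tendsto_finsetSum _ fun i _ ↦ (hfg i).const_mul _) hg
  rw [Metric.tendstoUniformlyOnFilter_iff]
  intro ε hε
  filter_upwards [(hb.eventually (gt_mem_nhds hε)).prod_mk hf]
    with ⟨n, a⟩ ⟨hbn, hanti, hsum, hle⟩
  rw [Real.dist_eq]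
  exact ((alternating_series_error_bound _ hanti hsum n).trans (hle n)).trans_lt hbn

lemma Nat.Prime.eq_two_or_mod_four {p : ℕ} (hp : p.Prime) : p = 2 ∨ p % 4 = 1 ∨ p % 4 = 3 :=
  hp.eq_two_or_odd.imp_right Nat.odd_mod_four_iff.1

lemma Nat.Prime.abs_rpow_neg_lt_one {p : ℕ} (hp : p.Prime) {s : ℝ} (hs : 0 < s) :
    |(p : ℝ) ^ (-s)| < 1 := by
  rw [abs_of_nonneg (by positivity)]
  exact Real.rpow_lt_one_of_one_lt_of_neg (by exact_mod_cast hp.one_lt) (by linarith)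

lemma natCast_rpow_neg_le_rpow_neg (n : ℕ) {s t : ℝ} (ht : 0 < t) (hts : t ≤ s) :
    (n : ℝ) ^ (-s) ≤ (n : ℝ) ^ (-t) := by
  rcases n.eq_zero_or_pos with rfl | hn
  · simp [Real.zero_rpow (by linarith : -s ≠ 0), Real.zero_rpow (by linarith : -t ≠ 0)]
  · exact Real.rpow_le_rpow_of_exponent_le (by exact_mod_cast hn) (by linarith)

lemma natCast_rpow_neg_two (n : ℕ) : (n : ℝ) ^ (-2 : ℝ) = ((n : ℝ) ^ 2)⁻¹ := by
  rw [Real.rpow_neg n.cast_nonneg, Real.rpow_two]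

noncomputable def chiFour : ℕ →* ℝ :=
  (Int.castRingHom ℝ).toMonoidHom.comp (ZMod.χ₄.toMonoidHom.comp (Nat.castRingHom (ZMod 4)))

lemma chiFour_apply (n : ℕ) : chiFour n = ZMod.χ₄ n := rfl

lemma chiFour_two_mul (k : ℕ) : chiFour (2 * k) = 0 := by
  rw [chiFour_apply, ZMod.χ₄_nat_eq_if_mod_four, if_pos (by omega), Int.cast_zero]

lemma chiFour_two_mul_add_one (k : ℕ) : chiFour (2 * k + 1) = (-1) ^ k := by
  rw [chiFour_apply, ZMod.χ₄_eq_neg_one_pow (by omega)]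
  norm_num [Nat.mul_add_div]

lemma chiFour_of_mod_four_eq_one {n : ℕ} (hn : n % 4 = 1) : chiFour n = 1 := by
  rw [chiFour_apply, ZMod.χ₄_nat_one_mod_four hn, Int.cast_one]

lemma chiFour_of_mod_four_eq_three {n : ℕ} (hn : n % 4 = 3) : chiFour n = -1 := by
  rw [chiFour_apply, ZMod.χ₄_nat_three_mod_four hn, Int.cast_neg, Int.cast_one]

lemma abs_chiFour_le_one (n : ℕ) : |chiFour n| ≤ 1 := by
  rw [chiFour_apply, ZMod.χ₄_nat_eq_if_mod_four]
  split_ifs <;> norm_num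

lemma summable_mul_rpow_neg {χ : ℕ → ℝ} (hχ : ∀ n, |χ n| ≤ 1) {s : ℝ} (hs : 1 < s) :
    Summable fun n : ℕ ↦ χ n * (n : ℝ) ^ (-s) := by
  refine (Real.summable_nat_rpow.2 (neg_lt_neg hs)).of_norm_bounded fun n ↦ ?_
  have hn : 0 ≤ (n : ℝ) ^ (-s) := by positivity
  rw [norm_mul, Real.norm_eq_abs, Real.norm_of_nonneg hn]
  exact mul_le_of_le_one_left hn (hχ n)

lemma hasProd_primes_inv_one_sub_mul_rpow (χ : ℕ →* ℝ) (hχ : ∀ n, |χ n| ≤ 1) {s : ℝ}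
    (hs : 1 < s) :
    HasProd (fun p : Nat.Primes ↦ (1 - χ p * (p : ℝ) ^ (-s))⁻¹) (∑' n, χ n * (n : ℝ) ^ (-s)) := by
  let f : ℕ →*₀ ℝ :=
    { toFun n := χ n * (n : ℝ) ^ (-s)
      map_zero' := by simp [Real.zero_rpow (by linarith : -s ≠ 0)]
      map_one' := by simp
      map_mul' m n := by
        simp only [map_mul, Nat.cast_mul, Real.mul_rpow m.cast_nonneg n.cast_nonneg]
        ring }
  exact EulerProduct.eulerProduct_completely_multiplicative_hasProd (f := f)
    (summable_mul_rpow_neg hχ hs).norm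

lemma hasProd_primes_inv_one_sub_rpow {s : ℝ} (hs : 1 < s) :
    HasProd (fun p : Nat.Primes ↦ (1 - (p : ℝ) ^ (-s))⁻¹) (∑' n : ℕ, (n : ℝ) ^ (-s)) := by
  simpa using hasProd_primes_inv_one_sub_mul_rpow 1 (by simp) hs

lemma tsum_chiFour_mul_rpow {s : ℝ} (hs : 1 < s) :
    ∑' n : ℕ, chiFour n * (n : ℝ) ^ (-s) = ∑' k : ℕ, (-1) ^ k * (2 * k + 1 : ℝ) ^ (-s) := by
  have h := summable_mul_rpow_neg abs_chiFour_le_one hs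
  have hodd : Function.Injective fun k : ℕ ↦ 2 * k + 1 :=
    (add_left_injective 1).comp (mul_right_injective₀ two_ne_zero)
  rw [← tsum_even_add_odd (f := fun n : ℕ ↦ chiFour n * (n : ℝ) ^ (-s))
    (h.comp_injective (mul_right_injective₀ two_ne_zero)) (h.comp_injective hodd)]
  simp only [chiFour_two_mul, zero_mul, tsum_zero, zero_add, chiFour_two_mul_add_one]
  push_cast
  rfl

lemma tendsto_tsum_chiFour_mul_rpow :
    Tendsto (fun s : ℝ ↦ ∑' n : ℕ, chiFour n * (n : ℝ) ^ (-s)) (𝓝[>] 1) (𝓝 (Real.pi / 4)) := by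
  have hodd : Function.Injective fun k : ℕ ↦ 2 * k + 1 :=
    (add_left_injective 1).comp (mul_right_injective₀ two_ne_zero)
  have hpos (k : ℕ) : (0 : ℝ) < 2 * k + 1 := by positivity
  refine (tendsto_tsum_alternating_of_le (f := fun s k ↦ (2 * k + 1 : ℝ) ^ (-s))
    (g := fun k ↦ (2 * k + 1 : ℝ)⁻¹) (b := fun k ↦ (2 * k + 1 : ℝ)⁻¹) ?_ ?_ ?_ ?_).congr' ?_
  · filter_upwards [self_mem_nhdsWithin] with s (hs : 1 < s)
    refine ⟨fun k l hkl ↦ Real.rpow_le_rpow_of_nonpos (hpos k) (by gcongr) (by linarith), ?_,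
      fun k ↦ ?_⟩
    · exact ((Real.summable_nat_rpow.2 (neg_lt_neg hs)).comp_injective hodd).congr
        fun k ↦ by simp
    · rw [← Real.rpow_neg_one]
      exact Real.rpow_le_rpow_of_exponent_le (le_add_of_nonneg_left (by positivity))
        (by linarith)
  · exact tendsto_inv_atTop_zero.comp (tendsto_atTop_add_const_right _ _
      (tendsto_natCast_atTop_atTop.const_mul_atTop two_pos))
  · intro k
    rw [← Real.rpow_neg_one]
    exact tendsto_nhdsWithin_of_tendsto_nhds
      (((Real.continuous_const_rpow (hpos k).ne').comp continuous_neg).tendsto' 1 _ rfl)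
  · simpa only [div_eq_mul_inv] using Real.tendsto_sum_pi_div_four
  · filter_upwards [self_mem_nhdsWithin] with s (hs : 1 < s)
    exact (tsum_chiFour_mul_rpow hs).symm

noncomputable def prodOneSubRpow (S : Set ℕ) (s : ℝ) : ℝ := ∏' n : S, (1 - (n : ℝ) ^ (-s))

lemma prodOneSubRpow_singleton (m : ℕ) (s : ℝ) : prodOneSubRpow {m} s = 1 - (m : ℝ) ^ (-s) :=
  tprod_singleton m fun n : ℕ ↦ 1 - (n : ℝ) ^ (-s)

lemma hasProd_one_sub_indicator_rpow (S : Set ℕ) {s : ℝ} (hs : 1 < s) :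
    HasProd (fun n ↦ 1 - S.indicator (fun n : ℕ ↦ (n : ℝ) ^ (-s)) n) (prodOneSubRpow S s) := by
  have hsum : Summable fun n : S ↦ -((n : ℝ) ^ (-s)) :=
    ((Real.summable_nat_rpow.2 (neg_lt_neg hs)).subtype S).neg
  have h : Multipliable fun n : S ↦ 1 - (n : ℝ) ^ (-s) := by
    simpa only [← sub_eq_add_neg] using Real.multipliable_one_add_of_summable hsum
  have h2 : HasProd (S.mulIndicator fun n : ℕ ↦ 1 - (n : ℝ) ^ (-s)) (prodOneSubRpow S s) :=
    hasProd_subtype_iff_mulIndicator.1 h.hasProd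
  have h3 : S.mulIndicator (fun n : ℕ ↦ 1 - (n : ℝ) ^ (-s))
      = fun n ↦ 1 - S.indicator (fun n : ℕ ↦ (n : ℝ) ^ (-s)) n := by
    funext n
    by_cases hn : n ∈ S <;> simp [hn]
  rwa [h3] at h2

lemma tendsto_prodOneSubRpow (S : Set ℕ) {σ : ℝ} (hσ : 1 < σ) :
    Tendsto (prodOneSubRpow S) (𝓝 σ) (𝓝 (prodOneSubRpow S σ)) := by
  obtain ⟨τ, hτ, hτσ⟩ := exists_between hσ
  simp only [prodOneSubRpow, sub_eq_add_neg]
  refine tendsto_tprod_one_add_of_dominated_convergence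
    (bound := fun n : S ↦ (n : ℝ) ^ (-τ))
    ((Real.summable_nat_rpow.2 (neg_lt_neg hτ)).subtype S) (fun n ↦ ?_) ?_
  · exact ((Real.continuousAt_const_rpow' (by linarith : -σ ≠ 0)).comp
      continuous_neg.continuousAt).tendsto.neg
  · filter_upwards [Ioi_mem_nhds hτσ] with s (hs : τ < s) n
    rw [norm_neg, Real.norm_of_nonneg (by positivity)]
    exact natCast_rpow_neg_le_rpow_neg n (by linarith) hs.le

lemma mulIndicator_primes_mul_chiFour {x : ℕ → ℝ} (hx : ∀ p, p.Prime → |x p| < 1) (n : ℕ) :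
    {p | p.Prime}.mulIndicator (fun p ↦ (1 - x p)⁻¹) n
      * {p | p.Prime}.mulIndicator (fun p ↦ (1 - chiFour p * x p)⁻¹) n
      * (1 - {p | p.Prime ∧ p % 4 = 3}.indicator (fun p ↦ x p ^ 2) n)
      * (1 - ({2} : Set ℕ).indicator x n)
    = {p | p.Prime ∧ p % 4 = 1}.mulIndicator (fun p ↦ ((1 - x p)⁻¹) ^ 2) n := by
  by_cases hn : n.Prime
  · obtain ⟨hlt, hgt⟩ := abs_lt.1 (hx n hn)
    have h₁ : 1 - x n ≠ 0 := by linarith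
    have h₂ : 1 + x n ≠ 0 := by linarith
    rcases hn.eq_two_or_mod_four with rfl | h | h
    · simp [hn, h₁, show chiFour 2 = 0 from chiFour_two_mul 1]
    · simp [hn, h, chiFour_of_mod_four_eq_one h, sq, show n ≠ 2 by omega]
    · simp [hn, h, chiFour_of_mod_four_eq_three h, show n ≠ 2 by omega]
      field_simp
      ring
  · simp [hn, show n ≠ 2 by rintro rfl; exact hn Nat.prime_two]

lemma mulIndicator_primes_eq {x : ℕ → ℝ} (hx : ∀ p, p.Prime → x p < 1) (n : ℕ) :
    {p | p.Prime}.mulIndicator (fun p ↦ (1 - x p)⁻¹) n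
      * (1 - {p | p.Prime ∧ p % 4 = 3}.indicator x n)
      * (1 - ({2} : Set ℕ).indicator x n)
    = {p | p.Prime ∧ p % 4 = 1}.mulIndicator (fun p ↦ (1 - x p)⁻¹) n := by
  by_cases hn : n.Prime
  · have h₁ : 1 - x n ≠ 0 := by linarith [hx n hn]
    rcases hn.eq_two_or_mod_four with rfl | h | h
    · simp [hn, h₁]
    · simp [hn, h, show n ≠ 2 by omega]
    · simp [hn, h, h₁, show n ≠ 2 by omega]
  · simp [hn, show n ≠ 2 by rintro rfl; exact hn Nat.prime_two]

lemma tprod_primes_one_mod_four_inv_one_sub_rpow_sq {s : ℝ} (hs : 1 < s) :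
    ∏' p : {p : ℕ // p.Prime ∧ p % 4 = 1}, ((1 - (p : ℝ) ^ (-s))⁻¹) ^ 2
      = (∑' n : ℕ, (n : ℝ) ^ (-s)) * (∑' n : ℕ, chiFour n * (n : ℝ) ^ (-s))
        * prodOneSubRpow {p | p.Prime ∧ p % 4 = 3} (2 * s) * (1 - 2 ^ (-s)) := by
  have hζ := hasProd_subtype_iff_mulIndicator (s := {p | p.Prime})
    (f := fun p : ℕ ↦ (1 - (p : ℝ) ^ (-s))⁻¹) |>.1 (hasProd_primes_inv_one_sub_rpow hs)
  have hL := hasProd_subtype_iff_mulIndicator (s := {p | p.Prime})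
    (f := fun p : ℕ ↦ (1 - chiFour p * (p : ℝ) ^ (-s))⁻¹) |>.1
    (hasProd_primes_inv_one_sub_mul_rpow chiFour abs_chiFour_le_one hs)
  have h₃ := hasProd_one_sub_indicator_rpow {p | p.Prime ∧ p % 4 = 3} (by linarith : 1 < 2 * s)
  have h₂ := hasProd_one_sub_indicator_rpow {2} hs
  rw [prodOneSubRpow_singleton, Nat.cast_ofNat] at h₂
  have hsq : (fun n : ℕ ↦ (n : ℝ) ^ (-(2 * s))) = fun n : ℕ ↦ ((n : ℝ) ^ (-s)) ^ 2 := by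
    funext n
    rw [← Real.rpow_mul_natCast n.cast_nonneg]
    ring_nf
  rw [hsq] at h₃
  have h := ((hζ.mul hL).mul h₃).mul h₂
  simp only [mulIndicator_primes_mul_chiFour
    (fun p hp ↦ hp.abs_rpow_neg_lt_one (by linarith : 0 < s))] at h
  exact (tprod_subtype {p | p.Prime ∧ p % 4 = 1} _).trans h.tprod_eq

lemma tprod_primes_one_mod_four_inv_one_sub_inv_sq :
    ∏' p : {p : ℕ // p.Prime ∧ p % 4 = 1}, (1 - ((p : ℝ) ^ 2)⁻¹)⁻¹
      = Real.pi ^ 2 / 6 * prodOneSubRpow {p | p.Prime ∧ p % 4 = 3} 2 * (3 / 4) := by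
  have hζ₀ := hasProd_primes_inv_one_sub_rpow one_lt_two
  simp only [natCast_rpow_neg_two] at hζ₀
  rw [show ∑' n : ℕ, ((n : ℝ) ^ 2)⁻¹ = Real.pi ^ 2 / 6 by
    simpa only [one_div] using hasSum_zeta_two.tsum_eq] at hζ₀
  have hζ := hasProd_subtype_iff_mulIndicator (s := {p | p.Prime})
    (f := fun p : ℕ ↦ (1 - ((p : ℝ) ^ 2)⁻¹)⁻¹) |>.1 hζ₀
  have h₃ := hasProd_one_sub_indicator_rpow {p | p.Prime ∧ p % 4 = 3} one_lt_two
  have h₂ := hasProd_one_sub_indicator_rpow {2} one_lt_two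
  simp only [natCast_rpow_neg_two] at h₃ h₂
  rw [prodOneSubRpow_singleton, natCast_rpow_neg_two, Nat.cast_ofNat,
    show (1 : ℝ) - (2 ^ 2)⁻¹ = 3 / 4 by norm_num] at h₂
  have h := (hζ.mul h₃).mul h₂
  simp only [mulIndicator_primes_eq (x := fun n : ℕ ↦ ((n : ℝ) ^ 2)⁻¹) fun p hp ↦
    inv_lt_one_of_one_lt₀ (one_lt_pow₀ (by exact_mod_cast hp.one_lt) two_ne_zero)] at h
  exact (tprod_subtype {p | p.Prime ∧ p % 4 = 1} _).trans h.tprod_eq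

theorem euler_product_residue_mod4 :
    Filter.Tendsto
      (fun s : ℝ =>
        (s - 1) * ∏' p : {p : ℕ // p.Prime ∧ p % 4 = 1}, ((1 - (p : ℝ) ^ (-s))⁻¹) ^ 2)
      (nhdsWithin 1 (Set.Ioi 1))
      (nhds ((1 / Real.pi) *
        ∏' p : {p : ℕ // p.Prime ∧ p % 4 = 1}, (1 - ((p : ℝ) ^ 2)⁻¹)⁻¹)) := by
  have hζ : Tendsto (fun s : ℝ ↦ (s - 1) * ∑' n : ℕ, (n : ℝ) ^ (-s)) (𝓝[>] 1) (𝓝 1) := by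
    simpa only [Real.rpow_neg (Nat.cast_nonneg _), one_div] using tendsto_sub_mul_tsum_nat_rpow
  have hQ : Tendsto (fun s : ℝ ↦ prodOneSubRpow {p | p.Prime ∧ p % 4 = 3} (2 * s)) (𝓝[>] 1)
      (𝓝 (prodOneSubRpow {p | p.Prime ∧ p % 4 = 3} 2)) :=
    (tendsto_prodOneSubRpow _ one_lt_two).comp
      (tendsto_nhdsWithin_of_tendsto_nhds ((continuous_const_mul 2).tendsto' 1 2 (mul_one 2)))
  have h₂ : Tendsto (fun s : ℝ ↦ 1 - (2 : ℝ) ^ (-s)) (𝓝[>] 1) (𝓝 (1 - 2⁻¹)) := by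
    rw [← Real.rpow_neg_one]
    exact tendsto_nhdsWithin_of_tendsto_nhds (tendsto_const_nhds.sub
      (((Real.continuous_const_rpow two_ne_zero).comp continuous_neg).tendsto 1))
  have h := ((hζ.mul tendsto_tsum_chiFour_mul_rpow).mul hQ).mul h₂
  rw [tprod_primes_one_mod_four_inv_one_sub_inv_sq]
  convert h.congr' ?_ using 2
  · field_simp
    ring
  · filter_upwards [self_mem_nhdsWithin] with s (hs : 1 < s)
    rw [tprod_primes_one_mod_four_inv_one_sub_rpow_sq hs]
    ring
end

section
/- The arithmetic function b₈, where b₈(n) is the number of primitive Dirichlet characters χ modulo n (with complex values) satisfying χ⁸ = 1, is multiplicative, and its values on prime powers are: b₈(4) = 1, b₈(8) = 2, b₈(16) = 4, b₈(32) = 8, and b₈(2^r) = 0 for r = 1 and r ≥ 6; and for every odd prime p and every r ≥ 1, b₈(p^r) = 1 if r = 1 and p ≡ 3 (mod 4), b₈(p^r) = 3 if r = 1 and p ≡ 5 (mod 8), b₈(p^r) = 7 if r = 1 and p ≡ 1 (mod 8), and b₈(p^r) = 0 if r ≥ 2. -/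
set_option maxRecDepth 8000

/-- `b₈ n` is the number of primitive Dirichlet characters `χ` modulo `n` with values in `ℂ`
satisfying `χ ^ 8 = 1`. -/
noncomputable def b₈ (n : ℕ) : ℕ :=
  Nat.card {χ : DirichletCharacter ℂ n // χ.IsPrimitive ∧ χ ^ 8 = 1}

open DirichletCharacter

namespace B8aux


/-- torsion count transfer along a `MulEquiv`. -/
lemma card_pow_congr {G H : Type*} [Monoid G] [Monoid H] (e : G ≃* H) (d : ℕ) :
    Nat.card {x : G // x ^ d = 1} = Nat.card {y : H // y ^ d = 1} :=
  Nat.card_congr <| e.toEquiv.subtypeEquiv fun x => by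
    show x ^ d = 1 ↔ e x ^ d = 1
    rw [← map_pow]
    exact ⟨fun h => by rw [h, map_one], fun h => e.injective (by rw [h, map_one])⟩

noncomputable def t (n : ℕ) : ℕ := Nat.card {x : (ZMod n)ˣ // x ^ 8 = 1}

noncomputable def a (n : ℕ) : ℕ := Nat.card {χ : DirichletCharacter ℂ n // χ ^ 8 = 1}

lemma a_eq_t (n : ℕ) [NeZero n] : a n = t n := by
  have h1 : NeZero (Monoid.exponent (ZMod n)ˣ) := ⟨Monoid.exponent_ne_zero_of_finite⟩
  have h2 : NeZero ((Monoid.exponent (ZMod n)ˣ : ℕ) : ℂ) := ⟨by exact_mod_cast h1.out⟩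
  exact card_pow_congr (MulChar.mulEquiv_units (ZMod n) ℂ).some 8

lemma t_one : t 1 = 1 := by rw [t, Nat.card_eq_fintype_card]; decide
lemma t_two : t 2 = 1 := by rw [t, Nat.card_eq_fintype_card]; decide
lemma t_four : t 4 = 2 := by rw [t, Nat.card_eq_fintype_card]; decide
lemma t_eight : t 8 = 4 := by rw [t, Nat.card_eq_fintype_card]; decide
lemma t_sixteen : t 16 = 8 := by rw [t, Nat.card_eq_fintype_card]; decide
lemma t_thirtytwo : t 32 = 16 := by rw [t, Nat.card_eq_fintype_card]; decide

/-- number of 8-torsion elements in a finite cyclic group -/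
lemma card_pow_cyclic (G : Type*) [CommGroup G] [Finite G] [IsCyclic G] :
    Nat.card {x : G // x ^ 8 = 1} = Nat.gcd (Nat.card G) 8 := by
  obtain ⟨ζ, hζ⟩ := IsCyclic.exists_generator (α := G)
  set f : G →* G := powMonoidHom 8 with hf
  have hker : Nat.card {x : G // x ^ 8 = 1} = Nat.card f.ker := by
    apply Nat.card_congr
    exact Equiv.subtypeEquivRight fun x => by
      simp [hf, MonoidHom.mem_ker, powMonoidHom_apply]
  have hrange : f.range = Subgroup.zpowers (ζ ^ 8) := by
    apply le_antisymm
    · rintro _ ⟨y, rfl⟩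
      obtain ⟨k, rfl⟩ := Subgroup.mem_zpowers_iff.mp (hζ y)
      exact Subgroup.mem_zpowers_iff.mpr ⟨k, by
        simp only [f, powMonoidHom_apply, ← zpow_natCast, ← zpow_mul, mul_comm]⟩
    · rw [Subgroup.zpowers_le]
      exact ⟨ζ, rfl⟩
  have hcard : Nat.card G = Nat.card f.range * Nat.card f.ker := by
    rw [Subgroup.card_eq_card_quotient_mul_card_subgroup f.ker]
    congr 1
    exact Nat.card_congr (QuotientGroup.quotientKerEquivRange f).toEquiv
  have horder : orderOf ζ = Nat.card G := by
    have := orderOf_eq_card_of_forall_mem_zpowers hζ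
    have : Fintype G := Fintype.ofFinite G
    rw [orderOf_eq_card_of_forall_mem_zpowers hζ, Nat.card_eq_fintype_card]
  have hr : Nat.card f.range = Nat.card G / Nat.gcd (Nat.card G) 8 := by
    rw [hrange, Nat.card_zpowers, orderOf_pow, horder]
  have hpos : 0 < Nat.card G := Nat.card_pos
  have hgd : Nat.gcd (Nat.card G) 8 ∣ Nat.card G := Nat.gcd_dvd_left _ _
  rw [hker]
  rw [hr] at hcard
  have h8 : 0 < Nat.gcd (Nat.card G) 8 := Nat.gcd_pos_of_pos_right _ (by norm_num)
  have hq : 0 < Nat.card G / Nat.gcd (Nat.card G) 8 := Nat.div_pos (Nat.le_of_dvd hpos hgd) h8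
  have := Nat.div_mul_cancel hgd
  -- Nat.card G = (N/g) * card ker and N = (N/g) * g  ⇒ card ker = g
  have h2 : (Nat.card G / Nat.gcd (Nat.card G) 8) * Nat.card f.ker
      = (Nat.card G / Nat.gcd (Nat.card G) 8) * Nat.gcd (Nat.card G) 8 := by
    rw [← hcard, this]
  exact Nat.eq_of_mul_eq_mul_left hq h2

lemma t_prime (p : ℕ) (hp : p.Prime) : t p = Nat.gcd (p - 1) 8 := by
  haveI : Fact p.Prime := ⟨hp⟩
  rw [t, card_pow_cyclic]
  congr 1
  rw [Nat.card_eq_fintype_card, ZMod.card_units]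




lemma toUnitHom_pow_eq_one {n : ℕ} {χ : DirichletCharacter ℂ n} (h : χ ^ 8 = 1)
    (u : (ZMod n)ˣ) : χ.toUnitHom u ^ 8 = 1 := by
  have h1 : MulChar.mulEquivToUnitHom (χ ^ 8) = MulChar.mulEquivToUnitHom 1 := by rw [h]
  rw [map_pow, map_one] at h1
  have h2 : ((MulChar.mulEquivToUnitHom χ) ^ 8) u = (1 : (ZMod n)ˣ →* ℂˣ) u := by rw [h1]
  rw [MonoidHom.pow_apply, MonoidHom.one_apply] at h2
  exact h2

lemma card_partition {α : Type*} [Finite α] (P Q : α → Prop) :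
    Nat.card {x : α // P x} = Nat.card {x : α // P x ∧ Q x} + Nat.card {x : α // P x ∧ ¬Q x} := by
  classical
  rw [← Nat.card_congr (Equiv.subtypeSubtypeEquivSubtypeInter P Q),
      ← Nat.card_congr (Equiv.subtypeSubtypeEquivSubtypeInter P (fun x => ¬ Q x)),
      ← Nat.card_sum]
  exact Nat.card_congr (Equiv.sumCompl (fun x : {x // P x} => Q x.1)).symm

lemma card_nonprim (p r : ℕ) (hp : p.Prime) (hr : 1 ≤ r) :
    Nat.card {χ : DirichletCharacter ℂ (p ^ r) // χ ^ 8 = 1 ∧ ¬ χ.IsPrimitive}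
      = a (p ^ (r - 1)) := by
  haveI : NeZero (p ^ r) := ⟨pow_ne_zero _ hp.pos.ne'⟩
  have hdvd : p ^ (r - 1) ∣ p ^ r := pow_dvd_pow p (by omega)
  have hlt : p ^ (r - 1) < p ^ r := Nat.pow_lt_pow_right hp.one_lt (by omega)
  symm
  apply Nat.card_congr
  refine Equiv.ofBijective (fun χ' => ⟨changeLevel hdvd χ'.1, ?_, ?_⟩) ⟨?_, ?_⟩
  · rw [← map_pow, χ'.2, map_one]
  · intro hprim
    have h1 : (changeLevel hdvd χ'.1).conductor ≤ p ^ (r - 1) :=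
      Nat.sInf_le (changeLevel_factorsThrough _ hdvd)
    rw [IsPrimitive] at hprim
    omega
  · intro x y hxy
    exact Subtype.ext (changeLevel_injective hdvd (congrArg Subtype.val hxy))
  · rintro ⟨χ, h8, hnp⟩
    have hc : χ.conductor ∣ p ^ r := conductor_dvd_level χ
    obtain ⟨k, hk, hck⟩ := (Nat.dvd_prime_pow hp).mp hc
    have hkr : k ≠ r := by
      intro h; subst h; exact hnp (by rw [IsPrimitive, hck])
    have hcd : χ.conductor ∣ p ^ (r - 1) := hck ▸ pow_dvd_pow p (by omega)
    have hft := factorsThrough_conductor χ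
    set χ' : DirichletCharacter ℂ (p ^ (r - 1)) := changeLevel hcd hft.χ₀ with hχ'
    have heq : χ = changeLevel hdvd χ' := by
      rw [hχ', ← changeLevel_trans _ hcd hdvd]
      exact hft.eq_changeLevel
    have h8' : χ' ^ 8 = 1 := by
      apply changeLevel_injective hdvd
      rw [map_pow, ← heq, h8, map_one]
    exact ⟨⟨χ', h8'⟩, Subtype.ext heq.symm⟩

lemma a_succ (p r : ℕ) (hp : p.Prime) (hr : 1 ≤ r) :
    a (p ^ r) = b₈ (p ^ r) + a (p ^ (r - 1)) := by
  rw [a, card_partition (fun χ : DirichletCharacter ℂ (p ^ r) => χ ^ 8 = 1)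
    (fun χ => χ.IsPrimitive), card_nonprim p r hp hr]
  congr 1
  rw [b₈]
  exact Nat.card_congr (Equiv.subtypeEquivRight fun χ => and_comm)

lemma b8_one : b₈ 1 = 1 := by
  have h : ∀ χ : DirichletCharacter ℂ 1, χ.IsPrimitive ∧ χ ^ 8 = 1 := fun χ => by
    rw [level_one χ]
    exact ⟨isPrimitive_one_level_one, one_pow 8⟩
  rw [b₈, Nat.card_congr (Equiv.subtypeUnivEquiv h)]
  exact Nat.card_unique

lemma b8_odd_prime_pow (p r : ℕ) (hp : p.Prime) (hp2 : p ≠ 2) (hr : 2 ≤ r) :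
    b₈ (p ^ r) = 0 := by
  haveI : NeZero (p ^ r) := ⟨pow_ne_zero _ hp.pos.ne'⟩
  rw [b₈, Nat.card_eq_zero]
  left
  constructor
  rintro ⟨χ, hprim, h8⟩
  obtain ⟨s, rfl⟩ : ∃ s, r = s + 2 := ⟨r - 2, by omega⟩
  have hdvd : p ^ (s + 1) ∣ p ^ (s + 2) := pow_dvd_pow p (by omega)
  have hft : FactorsThrough χ (p ^ (s + 1)) := by
    rw [factorsThrough_iff_ker_unitsMap hdvd]
    intro u hu
    -- the kernel has cardinality p
    have hcardK : Nat.card (ZMod.unitsMap hdvd).ker = p := by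
      have hsurj := ZMod.unitsMap_surjective (m := p ^ (s + 2)) hdvd
      have h1 : Nat.card (ZMod (p ^ (s + 2)))ˣ
          = Nat.card (ZMod (p ^ (s + 1)))ˣ * Nat.card (ZMod.unitsMap hdvd).ker := by
        rw [Subgroup.card_eq_card_quotient_mul_card_subgroup (ZMod.unitsMap hdvd).ker]
        congr 1
        rw [Nat.card_congr (QuotientGroup.quotientKerEquivRange (ZMod.unitsMap hdvd)).toEquiv,
          (ZMod.unitsMap hdvd).range_eq_top_of_surjective hsurj]
        exact Nat.card_congr Subgroup.topEquiv.toEquiv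
      haveI : NeZero (p ^ (s + 1)) := ⟨pow_ne_zero _ hp.pos.ne'⟩
      rw [Nat.card_eq_fintype_card, Nat.card_eq_fintype_card, ZMod.card_units_eq_totient,
        ZMod.card_units_eq_totient, Nat.totient_prime_pow hp (by omega),
        Nat.totient_prime_pow hp (by omega)] at h1
      have e1 : s + 2 - 1 = s + 1 := by omega
      have e2 : s + 1 - 1 = s := by omega
      rw [e1, e2] at h1
      have hpos : 0 < p ^ s * (p - 1) :=
        Nat.mul_pos (pow_pos hp.pos s) (by have := hp.two_le; omega)
      apply Nat.eq_of_mul_eq_mul_left hpos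
      rw [← h1, pow_succ]; ring
    have hup : u ^ p = 1 := by
      have h1 := pow_card_eq_one' (x := (⟨u, hu⟩ : (ZMod.unitsMap hdvd).ker))
      rw [hcardK] at h1
      have := congrArg Subtype.val h1
      simpa using this
    rw [MonoidHom.mem_ker]
    have hz8 : χ.toUnitHom u ^ 8 = 1 := toUnitHom_pow_eq_one h8 u
    have hzp : χ.toUnitHom u ^ p = 1 := by rw [← map_pow, hup, map_one]
    have hcop : Nat.Coprime p 8 := by
      rw [Nat.Prime.coprime_iff_not_dvd hp]
      intro hdvd8
      have h2 : p ∣ 2 ^ 3 := by norm_num; exact hdvd8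
      have h3 : p ∣ 2 := hp.dvd_of_dvd_pow h2
      have := Nat.le_of_dvd (by omega) h3
      have := hp.two_le
      exact hp2 (by omega)
    have : orderOf (χ.toUnitHom u) ∣ Nat.gcd p 8 :=
      Nat.dvd_gcd (orderOf_dvd_of_pow_eq_one hzp) (orderOf_dvd_of_pow_eq_one hz8)
    rw [hcop] at this
    exact orderOf_eq_one_iff.mp (Nat.eq_one_of_dvd_one this)
  have h1 : χ.conductor ≤ p ^ (s + 1) := Nat.sInf_le hft
  have hlt : p ^ (s + 1) < p ^ (s + 2) := Nat.pow_lt_pow_right hp.one_lt (by omega)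
  rw [IsPrimitive] at hprim
  omega


lemma b8_two_pow (s : ℕ) : b₈ (2 ^ (s + 6)) = 0 := by
  haveI : NeZero (2 ^ (s + 6)) := ⟨pow_ne_zero _ two_ne_zero⟩
  haveI : NeZero (2 ^ (s + 5)) := ⟨pow_ne_zero _ two_ne_zero⟩
  rw [b₈, Nat.card_eq_zero]
  left
  constructor
  rintro ⟨χ, hprim, h8⟩
  have hdvd : 2 ^ (s + 5) ∣ 2 ^ (s + 6) := pow_dvd_pow 2 (by omega)
  have hft : FactorsThrough χ (2 ^ (s + 5)) := by
    rw [factorsThrough_iff_ker_unitsMap hdvd]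
    intro u hu
    rw [MonoidHom.mem_ker] at hu ⊢
    have h1 : (ZMod.castHom hdvd (ZMod (2 ^ (s + 5)))) ((u : ZMod (2 ^ (s + 6)))) = 1 := by
      have := congrArg Units.val hu
      simpa [ZMod.unitsMap_def] using this
    set A := ((u : ZMod (2 ^ (s + 6))).val) with hA
    have hmod : A ≡ 1 [MOD 2 ^ (s + 5)] := by
      rw [← ZMod.natCast_eq_natCast_iff, Nat.cast_one]
      calc (A : ZMod (2 ^ (s + 5))) = ZMod.cast (u : ZMod (2 ^ (s + 6))) :=
            ZMod.natCast_val _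
        _ = 1 := by rw [← ZMod.castHom_apply (h := hdvd)]; exact h1
    have hAlt : A < 2 ^ (s + 6) := ZMod.val_lt _
    have hM2 : 2 ≤ 2 ^ (s + 5) := by
      calc 2 = 2 ^ 1 := rfl
      _ ≤ 2 ^ (s + 5) := Nat.pow_le_pow_right (by omega) (by omega)
    have h2M : 2 ^ (s + 6) = 2 * 2 ^ (s + 5) := by ring
    have hcases : A = 1 ∨ A = 1 + 2 ^ (s + 5) := by
      have hm := hmod
      unfold Nat.ModEq at hm
      rw [Nat.mod_eq_of_lt (by omega : (1:ℕ) < 2 ^ (s + 5))] at hm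
      obtain ⟨q, hq1, hq2⟩ : ∃ q, A = 2 ^ (s + 5) * q + 1 ∧ q < 2 := by
        refine ⟨A / 2 ^ (s + 5), ?_, ?_⟩
        · conv_lhs => rw [← Nat.div_add_mod A (2 ^ (s + 5))]
          rw [hm]
        · by_contra hq
          push_neg at hq
          have h4 : 2 * 2 ^ (s + 5) ≤ 2 ^ (s + 5) * (A / 2 ^ (s + 5)) := by
            calc 2 * 2 ^ (s + 5) = 2 ^ (s + 5) * 2 := by ring
            _ ≤ _ := Nat.mul_le_mul_left _ hq
          have h3 : 2 ^ (s + 5) * (A / 2 ^ (s + 5)) ≤ A := by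
            rw [mul_comm]
            exact Nat.div_mul_le_self A (2 ^ (s + 5))
          omega
      rcases (by omega : q = 0 ∨ q = 1) with rfl | rfl
      · left; simpa using hq1
      · right; rw [hq1, mul_one]; omega
    have huval : (u : ZMod (2 ^ (s + 6))) = (A : ZMod (2 ^ (s + 6))) := by
      rw [hA, ZMod.natCast_val, ZMod.cast_id]
    rcases hcases with h | h
    · have hu1 : u = 1 := Units.ext (by rw [huval, h, Nat.cast_one]; rfl)
      rw [hu1, map_one]
    · have hcop : Nat.Coprime (1 + 2 ^ (s + 2)) (2 ^ (s + 6)) := by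
        apply Nat.Coprime.pow_right
        have h2 : 2 ^ (s + 2) = 2 * 2 ^ (s + 1) := by ring
        rw [Nat.coprime_comm, Nat.Prime.coprime_iff_not_dvd Nat.prime_two]
        omega
      set w := ZMod.unitOfCoprime _ hcop with hw
      have hw8 : w ^ 8 = u := by
        apply Units.ext
        rw [Units.val_pow_eq_pow_val, huval, h]
        have hwv : (w : ZMod (2 ^ (s + 6))) = ((1 + 2 ^ (s + 2) : ℕ) : ZMod (2 ^ (s + 6))) :=
          ZMod.coe_unitOfCoprime _ hcop
        rw [hwv, ← Nat.cast_pow, ZMod.natCast_eq_natCast_iff']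
        have hnat : (1 + 2 ^ (s + 2)) ^ 8 = 1 + 2 ^ (s + 5) + 2 ^ (s + 6) *
            (7 * 2 ^ s + 7 * 2 ^ (2 * s + 3) + 35 * 2 ^ (3 * s + 3) + 7 * 2 ^ (4 * s + 7)
              + 7 * 2 ^ (5 * s + 8) + 2 ^ (6 * s + 11) + 2 ^ (7 * s + 10)) := by ring
        rw [hnat, Nat.add_mul_mod_self_left]
      rw [← hw8, map_pow]
      exact toUnitHom_pow_eq_one h8 w
  have h1 : χ.conductor ≤ 2 ^ (s + 5) := Nat.sInf_le hft
  have hlt : 2 ^ (s + 5) < 2 ^ (s + 6) := Nat.pow_lt_pow_right (by omega) (by omega)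
  rw [IsPrimitive] at hprim
  omega




section CRT

variable {m n : ℕ}

/-- units-level CRT equivalence -/
noncomputable def F (hmn : Nat.Coprime m n) : (ZMod (m * n))ˣ ≃* (ZMod m)ˣ × (ZMod n)ˣ :=
  (Units.mapEquiv (ZMod.chineseRemainder hmn).toMulEquiv).trans MulEquiv.prodUnits

lemma crt_fst (hmn : Nat.Coprime m n) (x : ZMod (m * n)) :
    (ZMod.chineseRemainder hmn x).1 = ZMod.castHom (dvd_mul_right m n) (ZMod m) x := by
  have h : (RingHom.fst (ZMod m) (ZMod n)).comp ((ZMod.chineseRemainder hmn : ZMod (m*n) ≃+* ZMod m × ZMod n) : ZMod (m*n) →+* ZMod m × ZMod n)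
      = ZMod.castHom (dvd_mul_right m n) (ZMod m) := RingHom.ext_zmod _ _
  exact DFunLike.congr_fun h x

lemma crt_snd (hmn : Nat.Coprime m n) (x : ZMod (m * n)) :
    (ZMod.chineseRemainder hmn x).2 = ZMod.castHom (dvd_mul_left n m) (ZMod n) x := by
  have h : (RingHom.snd (ZMod m) (ZMod n)).comp ((ZMod.chineseRemainder hmn : ZMod (m*n) ≃+* ZMod m × ZMod n) : ZMod (m*n) →+* ZMod m × ZMod n)
      = ZMod.castHom (dvd_mul_left n m) (ZMod n) := RingHom.ext_zmod _ _
  exact DFunLike.congr_fun h x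

lemma F_apply (hmn : Nat.Coprime m n) (u : (ZMod (m * n))ˣ) :
    F hmn u = (ZMod.unitsMap (dvd_mul_right m n) u, ZMod.unitsMap (dvd_mul_left n m) u) := by
  refine Prod.ext (Units.ext ?_) (Units.ext ?_)
  · show ((ZMod.chineseRemainder hmn (u : ZMod (m * n))).1 : ZMod m) = _
    rw [crt_fst hmn]
    simp [ZMod.unitsMap_def]
  · show ((ZMod.chineseRemainder hmn (u : ZMod (m * n))).2 : ZMod n) = _
    rw [crt_snd hmn]
    simp [ZMod.unitsMap_def]

/-- section of the first projection -/
noncomputable def iota1 (hmn : Nat.Coprime m n) : (ZMod m)ˣ →* (ZMod (m * n))ˣ :=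
  (F hmn).symm.toMonoidHom.comp (MonoidHom.inl _ _)

noncomputable def iota2 (hmn : Nat.Coprime m n) : (ZMod n)ˣ →* (ZMod (m * n))ˣ :=
  (F hmn).symm.toMonoidHom.comp (MonoidHom.inr _ _)

lemma F_iota1 (hmn : Nat.Coprime m n) (u : (ZMod m)ˣ) : F hmn (iota1 hmn u) = (u, 1) := by
  simp [iota1]

lemma F_iota2 (hmn : Nat.Coprime m n) (v : (ZMod n)ˣ) : F hmn (iota2 hmn v) = (1, v) := by
  simp [iota2]

lemma unitsMap_iota1_fst (hmn : Nat.Coprime m n) (u : (ZMod m)ˣ) :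
    ZMod.unitsMap (dvd_mul_right m n) (iota1 hmn u) = u := by
  have h := (F_apply hmn (iota1 hmn u)).symm.trans (F_iota1 hmn u)
  exact congrArg Prod.fst h

lemma unitsMap_iota1_snd (hmn : Nat.Coprime m n) (u : (ZMod m)ˣ) :
    ZMod.unitsMap (dvd_mul_left n m) (iota1 hmn u) = 1 := by
  have h := (F_apply hmn (iota1 hmn u)).symm.trans (F_iota1 hmn u)
  exact congrArg Prod.snd h

lemma unitsMap_iota2_fst (hmn : Nat.Coprime m n) (v : (ZMod n)ˣ) :
    ZMod.unitsMap (dvd_mul_right m n) (iota2 hmn v) = 1 := by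
  have h := (F_apply hmn (iota2 hmn v)).symm.trans (F_iota2 hmn v)
  exact congrArg Prod.fst h

lemma unitsMap_iota2_snd (hmn : Nat.Coprime m n) (v : (ZMod n)ˣ) :
    ZMod.unitsMap (dvd_mul_left n m) (iota2 hmn v) = v := by
  have h := (F_apply hmn (iota2 hmn v)).symm.trans (F_iota2 hmn v)
  exact congrArg Prod.snd h

lemma iota_mul (hmn : Nat.Coprime m n) (w : (ZMod (m * n))ˣ) :
    iota1 hmn (ZMod.unitsMap (dvd_mul_right m n) w)
      * iota2 hmn (ZMod.unitsMap (dvd_mul_left n m) w) = w := by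
  apply (F hmn).injective
  rw [map_mul, F_iota1, F_iota2, F_apply]
  rw [Prod.mk_mul_mk, one_mul, mul_one]

/-- combining a pair of characters into a character mod `m * n` -/
noncomputable def Phi (p : DirichletCharacter ℂ m × DirichletCharacter ℂ n) :
    DirichletCharacter ℂ (m * n) :=
  changeLevel (dvd_mul_right m n) p.1 * changeLevel (dvd_mul_left n m) p.2

/-- splitting a character mod `m * n` into a pair -/
noncomputable def Psi (hmn : Nat.Coprime m n) (χ : DirichletCharacter ℂ (m * n)) :
    DirichletCharacter ℂ m × DirichletCharacter ℂ n :=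
  (MulChar.ofUnitHom (χ.toUnitHom.comp (iota1 hmn)),
   MulChar.ofUnitHom (χ.toUnitHom.comp (iota2 hmn)))

lemma toUnitHom_Phi (p : DirichletCharacter ℂ m × DirichletCharacter ℂ n)
    (u : (ZMod (m * n))ˣ) :
    (Phi p).toUnitHom u = p.1.toUnitHom (ZMod.unitsMap (dvd_mul_right m n) u)
      * p.2.toUnitHom (ZMod.unitsMap (dvd_mul_left n m) u) := by
  have h1 : MulChar.mulEquivToUnitHom (Phi p)
      = MulChar.mulEquivToUnitHom (changeLevel (dvd_mul_right m n) p.1)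
        * MulChar.mulEquivToUnitHom (changeLevel (dvd_mul_left n m) p.2) := map_mul _ _ _
  have h2 : (Phi p).toUnitHom u = (changeLevel (dvd_mul_right m n) p.1).toUnitHom u
      * (changeLevel (dvd_mul_left n m) p.2).toUnitHom u := by
    have h3 := DFunLike.congr_fun h1 u
    exact h3
  rw [h2, changeLevel_toUnitHom, changeLevel_toUnitHom]
  rfl

lemma Psi_Phi (hmn : Nat.Coprime m n) (p : DirichletCharacter ℂ m × DirichletCharacter ℂ n) :
    Psi hmn (Phi p) = p := by
  have e1 : (Psi hmn (Phi p)).1 = p.1 := by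
    apply MulChar.equivToUnitHom.injective
    ext u
    show ((Psi hmn (Phi p)).1.toUnitHom u : ℂ) = (p.1.toUnitHom u : ℂ)
    have h1 : (Psi hmn (Phi p)).1.toUnitHom = (Phi p).toUnitHom.comp (iota1 hmn) := by
      rw [Psi]
      simp [MulChar.toUnitHom_eq, MulChar.ofUnitHom_eq]
    rw [h1]
    show ((Phi p).toUnitHom (iota1 hmn u) : ℂ) = _
    rw [toUnitHom_Phi, unitsMap_iota1_fst, unitsMap_iota1_snd, map_one, mul_one]
  have e2 : (Psi hmn (Phi p)).2 = p.2 := by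
    apply MulChar.equivToUnitHom.injective
    ext u
    show ((Psi hmn (Phi p)).2.toUnitHom u : ℂ) = (p.2.toUnitHom u : ℂ)
    have h1 : (Psi hmn (Phi p)).2.toUnitHom = (Phi p).toUnitHom.comp (iota2 hmn) := by
      rw [Psi]
      simp [MulChar.toUnitHom_eq, MulChar.ofUnitHom_eq]
    rw [h1]
    show ((Phi p).toUnitHom (iota2 hmn u) : ℂ) = _
    rw [toUnitHom_Phi, unitsMap_iota2_fst, unitsMap_iota2_snd, map_one, one_mul]
  exact Prod.ext e1 e2

lemma Phi_Psi (hmn : Nat.Coprime m n) (χ : DirichletCharacter ℂ (m * n)) :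
    Phi (Psi hmn χ) = χ := by
  apply MulChar.equivToUnitHom.injective
  ext u
  show ((Phi (Psi hmn χ)).toUnitHom u : ℂ) = (χ.toUnitHom u : ℂ)
  rw [toUnitHom_Phi]
  have h1 : (Psi hmn χ).1.toUnitHom = χ.toUnitHom.comp (iota1 hmn) := by
    rw [Psi]; simp [MulChar.toUnitHom_eq, MulChar.ofUnitHom_eq]
  have h2 : (Psi hmn χ).2.toUnitHom = χ.toUnitHom.comp (iota2 hmn) := by
    rw [Psi]; simp [MulChar.toUnitHom_eq, MulChar.ofUnitHom_eq]
  rw [h1, h2]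
  apply congrArg
  rw [MonoidHom.comp_apply, MonoidHom.comp_apply, ← map_mul, iota_mul hmn u]

lemma Phi_one : Phi (1 : DirichletCharacter ℂ m × DirichletCharacter ℂ n) = 1 := by
  rw [Phi, Prod.fst_one, Prod.snd_one, map_one, map_one, mul_one]

lemma Phi_pow8 (p : DirichletCharacter ℂ m × DirichletCharacter ℂ n) :
    Phi (p ^ 8) = (Phi p) ^ 8 := by
  rw [Phi, Phi, Prod.pow_fst, Prod.pow_snd, map_pow, map_pow]
  exact (mul_pow _ _ 8).symm

lemma units_eq_one {g k : ℕ} (hgk : Nat.Coprime g k) (y : (ZMod (g * k))ˣ)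
    (h1 : ZMod.unitsMap (dvd_mul_right g k) y = 1)
    (h2 : ZMod.unitsMap (dvd_mul_left k g) y = 1) : y = 1 := by
  apply Units.ext
  apply (ZMod.chineseRemainder hgk).injective
  have e1 : (ZMod.chineseRemainder hgk (y : ZMod (g * k))).1 = 1 := by
    rw [crt_fst]
    have := congrArg Units.val h1
    simpa [ZMod.unitsMap_def] using this
  have e2 : (ZMod.chineseRemainder hgk (y : ZMod (g * k))).2 = 1 := by
    rw [crt_snd]
    have := congrArg Units.val h2
    simpa [ZMod.unitsMap_def] using this
  rw [Units.val_one, map_one]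
  exact Prod.ext (by rw [e1]; rfl) (by rw [e2]; rfl)

lemma Psi_fst_factorsThrough (hmn : Nat.Coprime m n) [NeZero m] [NeZero n]
    (χ : DirichletCharacter ℂ (m * n)) :
    (Psi hmn χ).1.FactorsThrough (Nat.gcd χ.conductor m) := by
  haveI : NeZero (m * n) := ⟨mul_ne_zero (NeZero.ne m) (NeZero.ne n)⟩
  have hcdvd : χ.conductor ∣ m * n := conductor_dvd_level χ
  set g := Nat.gcd χ.conductor m with hgdef
  set k := Nat.gcd χ.conductor n with hkdef
  have hgk : g * k = χ.conductor := (Nat.gcd_mul_gcd_eq_iff_dvd_mul_of_coprime hmn).mpr hcdvd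
  have hg : g ∣ m := Nat.gcd_dvd_right _ m
  have hk : k ∣ n := Nat.gcd_dvd_right _ n
  have hcop : Nat.Coprime g k :=
    Nat.Coprime.coprime_dvd_left hg (Nat.Coprime.coprime_dvd_right hk hmn)
  have hftgk : χ.FactorsThrough (g * k) := hgk.symm ▸ factorsThrough_conductor χ
  obtain ⟨hdvd', χ₀, hχ₀⟩ := hftgk
  rw [factorsThrough_iff_ker_unitsMap hg]
  intro u hu
  rw [MonoidHom.mem_ker] at hu ⊢
  have hPsi1 : (Psi hmn χ).1.toUnitHom = χ.toUnitHom.comp (iota1 hmn) := by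
    rw [Psi]; simp [MulChar.toUnitHom_eq, MulChar.ofUnitHom_eq]
  rw [hPsi1, MonoidHom.comp_apply]
  set w := iota1 hmn u with hwdef
  -- the image of w at level g * k is 1
  have hy : ZMod.unitsMap hdvd' w = 1 := by
    apply units_eq_one hcop
    · have c1 := DFunLike.congr_fun (ZMod.unitsMap_comp (dvd_mul_right g k) hdvd') w
      have c2 := DFunLike.congr_fun (ZMod.unitsMap_comp hg (dvd_mul_right m n)) w
      rw [MonoidHom.comp_apply] at c1 c2
      have h3 : ZMod.unitsMap hg (ZMod.unitsMap (dvd_mul_right m n) w) = 1 := by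
        rw [hwdef, unitsMap_iota1_fst, hu]
      exact c1.trans (c2.symm.trans h3)
    · have c1 := DFunLike.congr_fun (ZMod.unitsMap_comp (dvd_mul_left k g) hdvd') w
      have c2 := DFunLike.congr_fun (ZMod.unitsMap_comp hk (dvd_mul_left n m)) w
      rw [MonoidHom.comp_apply] at c1 c2
      have h3 : ZMod.unitsMap hk (ZMod.unitsMap (dvd_mul_left n m) w) = 1 := by
        rw [hwdef, unitsMap_iota1_snd, map_one]
      exact c1.trans (c2.symm.trans h3)
  rw [hχ₀, changeLevel_toUnitHom, MonoidHom.comp_apply, hy, map_one]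

lemma Psi_snd_factorsThrough (hmn : Nat.Coprime m n) [NeZero m] [NeZero n]
    (χ : DirichletCharacter ℂ (m * n)) :
    (Psi hmn χ).2.FactorsThrough (Nat.gcd χ.conductor n) := by
  haveI : NeZero (m * n) := ⟨mul_ne_zero (NeZero.ne m) (NeZero.ne n)⟩
  have hcdvd : χ.conductor ∣ m * n := conductor_dvd_level χ
  set g := Nat.gcd χ.conductor m with hgdef
  set k := Nat.gcd χ.conductor n with hkdef
  have hgk : g * k = χ.conductor := (Nat.gcd_mul_gcd_eq_iff_dvd_mul_of_coprime hmn).mpr hcdvd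
  have hg : g ∣ m := Nat.gcd_dvd_right _ m
  have hk : k ∣ n := Nat.gcd_dvd_right _ n
  have hcop : Nat.Coprime g k :=
    Nat.Coprime.coprime_dvd_left hg (Nat.Coprime.coprime_dvd_right hk hmn)
  have hftgk : χ.FactorsThrough (g * k) := hgk.symm ▸ factorsThrough_conductor χ
  obtain ⟨hdvd', χ₀, hχ₀⟩ := hftgk
  rw [factorsThrough_iff_ker_unitsMap hk]
  intro u hu
  rw [MonoidHom.mem_ker] at hu ⊢
  have hPsi2 : (Psi hmn χ).2.toUnitHom = χ.toUnitHom.comp (iota2 hmn) := by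
    rw [Psi]; simp [MulChar.toUnitHom_eq, MulChar.ofUnitHom_eq]
  rw [hPsi2, MonoidHom.comp_apply]
  set w := iota2 hmn u with hwdef
  have hy : ZMod.unitsMap hdvd' w = 1 := by
    apply units_eq_one hcop
    · have c1 := DFunLike.congr_fun (ZMod.unitsMap_comp (dvd_mul_right g k) hdvd') w
      have c2 := DFunLike.congr_fun (ZMod.unitsMap_comp hg (dvd_mul_right m n)) w
      rw [MonoidHom.comp_apply] at c1 c2
      have h3 : ZMod.unitsMap hg (ZMod.unitsMap (dvd_mul_right m n) w) = 1 := by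
        rw [hwdef, unitsMap_iota2_fst, map_one]
      exact c1.trans (c2.symm.trans h3)
    · have c1 := DFunLike.congr_fun (ZMod.unitsMap_comp (dvd_mul_left k g) hdvd') w
      have c2 := DFunLike.congr_fun (ZMod.unitsMap_comp hk (dvd_mul_left n m)) w
      rw [MonoidHom.comp_apply] at c1 c2
      have h3 : ZMod.unitsMap hk (ZMod.unitsMap (dvd_mul_left n m) w) = 1 := by
        rw [hwdef, unitsMap_iota2_snd, hu]
      exact c1.trans (c2.symm.trans h3)
  rw [hχ₀, changeLevel_toUnitHom, MonoidHom.comp_apply, hy, map_one]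

lemma Phi_factorsThrough (p : DirichletCharacter ℂ m × DirichletCharacter ℂ n)
    {d₁ d₂ : ℕ} (h1 : p.1.FactorsThrough d₁) (h2 : p.2.FactorsThrough d₂) :
    (Phi p).FactorsThrough (d₁ * d₂) := by
  obtain ⟨hd1, χ₁, e1⟩ := h1
  obtain ⟨hd2, χ₂, e2⟩ := h2
  refine ⟨Nat.mul_dvd_mul hd1 hd2,
    changeLevel (dvd_mul_right d₁ d₂) χ₁ * changeLevel (dvd_mul_left d₂ d₁) χ₂, ?_⟩
  rw [Phi, e1, e2, map_mul]
  rw [← changeLevel_trans _ (dvd_mul_right d₁ d₂) (Nat.mul_dvd_mul hd1 hd2),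
      ← changeLevel_trans _ (dvd_mul_left d₂ d₁) (Nat.mul_dvd_mul hd1 hd2),
      ← changeLevel_trans _ hd1 (dvd_mul_right m n),
      ← changeLevel_trans _ hd2 (dvd_mul_left n m)]

lemma Phi_isPrimitive_iff (hmn : Nat.Coprime m n) [NeZero m] [NeZero n]
    (p : DirichletCharacter ℂ m × DirichletCharacter ℂ n) :
    (Phi p).IsPrimitive ↔ p.1.IsPrimitive ∧ p.2.IsPrimitive := by
  have mpos : 0 < m := Nat.pos_of_ne_zero (NeZero.ne m)
  have npos : 0 < n := Nat.pos_of_ne_zero (NeZero.ne n)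
  constructor
  · intro h
    rw [IsPrimitive] at h
    by_contra hcon
    rw [not_and_or] at hcon
    have hub : ∀ d₁ d₂, p.1.FactorsThrough d₁ → p.2.FactorsThrough d₂ → d₁ * d₂ < m * n →
        False := by
      intro d₁ d₂ f1 f2 hlt
      have hle : (Phi p).conductor ≤ d₁ * d₂ := Nat.sInf_le (Phi_factorsThrough p f1 f2)
      omega
    rcases hcon with hc | hc
    · have hlt : p.1.conductor < m :=
        lt_of_le_of_ne (Nat.le_of_dvd mpos (conductor_dvd_level _)) hc
      exact hub _ n (factorsThrough_conductor p.1) (FactorsThrough.same_level p.2)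
        (mul_lt_mul_of_pos_right hlt npos)
    · have hlt : p.2.conductor < n :=
        lt_of_le_of_ne (Nat.le_of_dvd npos (conductor_dvd_level _)) hc
      exact hub m _ (FactorsThrough.same_level p.1) (factorsThrough_conductor p.2)
        (mul_lt_mul_of_pos_left hlt mpos)
  · rintro ⟨h1, h2⟩
    rw [IsPrimitive]
    have h1' := Psi_fst_factorsThrough hmn (Phi p)
    rw [Psi_Phi hmn p] at h1'
    have h2' := Psi_snd_factorsThrough hmn (Phi p)
    rw [Psi_Phi hmn p] at h2'
    have hm : m ≤ Nat.gcd (Phi p).conductor m := by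
      have ha : p.1.conductor ≤ Nat.gcd (Phi p).conductor m := Nat.sInf_le h1'
      have hb : p.1.conductor = m := h1
      omega
    have hmc : m ∣ (Phi p).conductor := by
      have hgm : Nat.gcd (Phi p).conductor m = m :=
        Nat.le_antisymm (Nat.le_of_dvd mpos (Nat.gcd_dvd_right _ _)) hm
      have hd := Nat.gcd_dvd_left (Phi p).conductor m
      rw [hgm] at hd
      exact hd
    have hn : n ≤ Nat.gcd (Phi p).conductor n := by
      have ha : p.2.conductor ≤ Nat.gcd (Phi p).conductor n := Nat.sInf_le h2'
      have hb : p.2.conductor = n := h2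
      omega
    have hnc : n ∣ (Phi p).conductor := by
      have hgn : Nat.gcd (Phi p).conductor n = n :=
        Nat.le_antisymm (Nat.le_of_dvd npos (Nat.gcd_dvd_right _ _)) hn
      have hd := Nat.gcd_dvd_left (Phi p).conductor n
      rw [hgn] at hd
      exact hd
    exact Nat.dvd_antisymm (conductor_dvd_level _) (Nat.Coprime.mul_dvd_of_dvd_of_dvd hmn hmc hnc)

lemma b8_mul (hmn : Nat.Coprime m n) (hm : m ≠ 0) (hn : n ≠ 0) :
    b₈ (m * n) = b₈ m * b₈ n := by
  haveI : NeZero m := ⟨hm⟩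
  haveI : NeZero n := ⟨hn⟩
  haveI : NeZero (m * n) := ⟨mul_ne_zero hm hn⟩
  rw [b₈, b₈, b₈, ← Nat.card_prod]
  symm
  apply Nat.card_congr
  have hiff : ∀ p : DirichletCharacter ℂ m × DirichletCharacter ℂ n,
      ((p.1.IsPrimitive ∧ p.1 ^ 8 = 1) ∧ (p.2.IsPrimitive ∧ p.2 ^ 8 = 1)) ↔
        ((Phi p).IsPrimitive ∧ (Phi p) ^ 8 = 1) := by
    intro p
    have hpow : (Phi p) ^ 8 = 1 ↔ (p.1 ^ 8 = 1 ∧ p.2 ^ 8 = 1) := by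
      have hinj : Function.Injective (Phi (m := m) (n := n)) :=
        Function.LeftInverse.injective (Psi_Phi hmn)
      constructor
      · intro h
        have h4 : Phi (p ^ 8) = Phi 1 := by rw [Phi_pow8, h, Phi_one]
        have h5 := hinj h4
        exact ⟨congrArg Prod.fst h5, congrArg Prod.snd h5⟩
      · rintro ⟨ha, hb⟩
        rw [← Phi_pow8]
        have h4 : p ^ 8 = 1 := Prod.ext (by simpa using ha) (by simpa using hb)
        rw [h4, Phi_one]
    rw [Phi_isPrimitive_iff hmn, hpow]
    tauto
  exact Equiv.subtypeProdEquivProd.symm.trans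
    ((⟨Phi, Psi hmn, Psi_Phi hmn, Phi_Psi hmn⟩ :
      (DirichletCharacter ℂ m × DirichletCharacter ℂ n) ≃ DirichletCharacter ℂ (m * n)).subtypeEquiv hiff)

end CRT


end B8aux

open B8aux in
theorem b₈_multiplicative_and_values :
    b₈ 1 = 1 ∧
    (∀ m n : ℕ, Nat.Coprime m n → b₈ (m * n) = b₈ m * b₈ n) ∧
    b₈ 2 = 0 ∧
    b₈ 4 = 1 ∧
    b₈ 8 = 2 ∧
    b₈ 16 = 4 ∧
    b₈ 32 = 8 ∧
    (∀ r : ℕ, 6 ≤ r → b₈ (2 ^ r) = 0) ∧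
    (∀ p : ℕ, p.Prime → p ≠ 2 →
      (p % 4 = 3 → b₈ p = 1) ∧
      (p % 8 = 5 → b₈ p = 3) ∧
      (p % 8 = 1 → b₈ p = 7) ∧
      (∀ r : ℕ, 2 ≤ r → b₈ (p ^ r) = 0)) := by
  have ha1 : a 1 = 1 := by rw [a_eq_t, t_one]
  have ha2 : a 2 = 1 := by rw [a_eq_t, t_two]
  have ha4 : a 4 = 2 := by rw [a_eq_t, t_four]
  have ha8 : a 8 = 4 := by rw [a_eq_t, t_eight]
  have ha16 : a 16 = 8 := by rw [a_eq_t, t_sixteen]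
  have ha32 : a 32 = 16 := by rw [a_eq_t, t_thirtytwo]
  have k1 := a_succ 2 1 Nat.prime_two le_rfl
  have k2 := a_succ 2 2 Nat.prime_two (by omega)
  have k3 := a_succ 2 3 Nat.prime_two (by omega)
  have k4 := a_succ 2 4 Nat.prime_two (by omega)
  have k5 := a_succ 2 5 Nat.prime_two (by omega)
  norm_num at k1 k2 k3 k4 k5
  refine ⟨b8_one, ?_, by omega, by omega, by omega, by omega, by omega, ?_, ?_⟩
  · intro m n h
    rcases eq_or_ne m 0 with rfl | hm
    · have hn1 : n = 1 := Nat.coprime_zero_left n |>.mp h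
      subst hn1
      rw [mul_one, b8_one, mul_one]
    rcases eq_or_ne n 0 with rfl | hn
    · have hm1 : m = 1 := Nat.coprime_zero_right m |>.mp h
      subst hm1
      rw [one_mul, b8_one, one_mul]
    exact b8_mul h hm hn
  · intro r hr
    obtain ⟨s, rfl⟩ : ∃ s, r = s + 6 := ⟨r - 6, by omega⟩
    exact b8_two_pow s
  · intro p hp hp2
    haveI : NeZero p := ⟨hp.pos.ne'⟩
    have hp3 : 3 ≤ p := by have := hp.two_le; omega
    have hg : a p = Nat.gcd (p - 1) 8 := by rw [a_eq_t, t_prime p hp]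
    have hk := a_succ p 1 hp le_rfl
    rw [show p ^ (1 - 1) = 1 from by norm_num, pow_one] at hk
    rw [ha1, hg] at hk
    have hgcd : Nat.gcd (p - 1) 8 = Nat.gcd ((p - 1) % 8) 8 := by
      rw [Nat.gcd_comm, Nat.gcd_rec]
    refine ⟨?_, ?_, ?_, fun r hr => b8_odd_prime_pow p r hp hp2 hr⟩
    · intro hmod
      have h26 : (p - 1) % 8 = 2 ∨ (p - 1) % 8 = 6 := by omega
      rcases h26 with h | h <;> rw [h] at hgcd <;>
        simp only [show Nat.gcd 2 8 = 2 from by decide,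
          show Nat.gcd 6 8 = 2 from by decide] at hgcd <;> omega
    · intro hmod
      have h4 : (p - 1) % 8 = 4 := by omega
      rw [h4, show Nat.gcd 4 8 = 4 from by decide] at hgcd
      omega
    · intro hmod
      have h0 : (p - 1) % 8 = 0 := by omega
      rw [h0, show Nat.gcd 0 8 = 8 from by decide] at hgcd
      omega
end

section
/- For every complex number s with Re(s) > 1, letting Λ₁(s) = ∑_{n=1}^∞ f(n)/n^s, where f(n) = 1 if n is expressible as x² + y² with x, y integers and f(n) = 0 otherwise, one has Λ₁(s)² = ζ(s) · L(s, χ₋₄) · (1 - 2^{-s})^{-1} · ∏_{p prime, p ≡ 3 (mod 4)} (1 - p^{-2s})^{-1}, where ζ is the Riemann zeta function and L(s, χ₋₄) = ∑_{n=1}^∞ χ₋₄(n)/n^s is the Dirichlet L-function of the nontrivial character χ₋₄ modulo 4. -/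
/-!
By the two-squares theorem, `n` is a sum of two squares iff every prime `q ≡ 3 (mod 4)` divides it
to an even power. Hence `f` is multiplicative, with Euler factor `(1 - p^{-s})⁻¹` at `p ≢ 3 (mod 4)`
and `(1 - p^{-2s})⁻¹` at `p ≡ 3 (mod 4)`. Squaring and comparing with the Euler factors
`(1 - p^{-s})⁻¹ (1 - χ₋₄(p) p^{-s})⁻¹` of `ζ(s) L(s, χ₋₄)`: they agree at `p ≡ 1 (mod 4)`;
at `p = 2`, where `χ₋₄` vanishes, one factor `(1 - 2^{-s})⁻¹` is missing; and at `p ≡ 3 (mod 4)`,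
`(1 - p^{-2s})⁻² = (1 - p^{-s})⁻¹ (1 + p^{-s})⁻¹ (1 - p^{-2s})⁻¹`.
-/

open Classical in
/-- The indicator function of sums of two squares: `f n = 1` if `n = x² + y²` for some
integers `x, y`, and `f n = 0` otherwise. -/
noncomputable def sumTwoSquaresIndicator (n : ℕ) : ℂ :=
  if ∃ x y : ℤ, (n : ℤ) = x ^ 2 + y ^ 2 then 1 else 0

open Complex Nat

lemma norm_natCast_cpow_neg_lt_one {n : ℕ} (hn : 1 < n) {s : ℂ} (hs : 0 < s.re) :
    ‖(n : ℂ) ^ (-s)‖ < 1 := by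
  rw [norm_natCast_cpow_of_pos (by omega), neg_re]
  exact Real.rpow_lt_one_of_one_lt_of_neg (by exact_mod_cast hn) (by linarith)

lemma cpow_neg_two_mul (z s : ℂ) : z ^ (-(2 * s)) = (z ^ (-s)) ^ 2 := by
  rw [← cpow_nat_mul]
  congr 1
  push_cast
  ring

lemma tsum_ite_even_pow {K : Type*} [NormedDivisionRing K] [CompleteSpace K] {x : K}
    (hx : ‖x‖ < 1) : ∑' e : ℕ, (if Even e then x ^ e else 0) = (1 - x ^ 2)⁻¹ := by
  have hx2 : ‖x ^ 2‖ < 1 := by rw [norm_pow]; nlinarith [norm_nonneg x]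
  rw [← tsum_even_add_odd]
  · simp [pow_mul, tsum_geometric_of_norm_lt_one hx2]
  · simpa [pow_mul] using summable_geometric_of_norm_lt_one hx2
  · simp

lemma Complex.multipliable_inv_one_sub {ι : Type*} {x : ι → ℂ} (hx : Summable x)
    (h1 : ∀ i, x i ≠ 1) : Multipliable fun i ↦ (1 - x i)⁻¹ := by
  have hlog : Summable fun i ↦ log (1 - x i) := by
    simpa [sub_eq_add_neg] using summable_log_one_add_of_summable hx.neg
  exact ((hasProd_of_hasSum_log (fun i ↦ sub_ne_zero.2 (h1 i).symm) hlog.hasSum).inv₀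
    (exp_ne_zero _)).multipliable

namespace LSeries

lemma term_mul_of_coprime {f : ℕ → ℂ} (hmul : ∀ {m n : ℕ}, m.Coprime n → f (m * n) = f m * f n)
    (s : ℂ) {m n : ℕ} (h : m.Coprime n) : term f s (m * n) = term f s m * term f s n := by
  rcases eq_or_ne m 0 with rfl | hm
  · simp
  rcases eq_or_ne n 0 with rfl | hn
  · simp
  rw [term_of_ne_zero (mul_ne_zero hm hn), term_of_ne_zero hm, term_of_ne_zero hn, hmul h,
    Nat.cast_mul, natCast_mul_natCast_cpow, mul_div_mul_comm]

lemma term_pow (f : ℕ → ℂ) (s : ℂ) {p : ℕ} (hp : p ≠ 0) (e : ℕ) :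
    term f s (p ^ e) = f (p ^ e) * ((p : ℂ) ^ (-s)) ^ e := by
  rw [term_of_ne_zero (pow_ne_zero e hp), div_eq_mul_inv, Nat.cast_pow,
    ← natCast_cpow_natCast_mul, ← cpow_neg, ← mul_neg, cpow_nat_mul]

end LSeries

open LSeries in
theorem LSeries_eulerProduct_hasProd {f : ℕ → ℂ} (hf₁ : f 1 = 1)
    (hmul : ∀ {m n : ℕ}, m.Coprime n → f (m * n) = f m * f n) {s : ℂ} (hs : LSeriesSummable f s) :
    HasProd (fun p : Primes ↦ ∑' e, f (p ^ e) * ((p : ℂ) ^ (-s)) ^ e) (LSeries f s) := by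
  have := EulerProduct.eulerProduct_hasProd (f := term f s) (by simp [hf₁])
    (term_mul_of_coprime hmul s) (summable_norm_iff.mpr hs) (term_zero f s)
  rw [LSeries]
  convert this using 1
  funext p
  exact tsum_congr fun e ↦ (term_pow f s p.prop.ne_zero e).symm

theorem hasProd_ite_inv_one_sub_prime_cpow (P : ℕ → Prop) [DecidablePred P] {s : ℂ}
    (hs : 1 < s.re) :
    HasProd (fun p : Primes ↦ if P p then (1 - (p : ℂ) ^ (-s))⁻¹ else 1)
      (∏' p : {p : ℕ // p.Prime ∧ P p}, (1 - (p : ℂ) ^ (-s))⁻¹) := by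
  let g : {p : ℕ // p.Prime ∧ P p} → Primes := fun p ↦ ⟨p.1, p.2.1⟩
  have hg : Function.Injective g := fun _ _ h ↦ Subtype.ext (Subtype.mk.inj h)
  have hsum : Summable fun p : {p : ℕ // p.Prime ∧ P p} ↦ (p : ℂ) ^ (-s) := by
    simpa [cpow_neg, Function.comp_def] using
      (Complex.summable_one_div_nat_cpow.mpr hs).comp_injective Subtype.val_injective
  have hne : ∀ p : {p : ℕ // p.Prime ∧ P p}, (p : ℂ) ^ (-s) ≠ 1 := fun p h ↦ by
    simpa [h] using norm_natCast_cpow_neg_lt_one p.2.1.one_lt (s := s) (by linarith)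
  refine (hg.hasProd_iff fun p hp ↦ if_neg fun hP ↦ hp ⟨⟨p, p.prop, hP⟩, rfl⟩).mp ?_
  convert (Complex.multipliable_inv_one_sub hsum hne).hasProd using 2 with p
  exact if_pos p.2.2

lemma exists_int_sq_add_sq_iff (n : ℕ) :
    (∃ x y : ℤ, (n : ℤ) = x ^ 2 + y ^ 2) ↔
      ∀ q : ℕ, q.Prime → q % 4 = 3 → Even (n.factorization q) := by
  have hnat : (∃ x y : ℤ, (n : ℤ) = x ^ 2 + y ^ 2) ↔ ∃ x y : ℕ, n = x ^ 2 + y ^ 2 :=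
    ⟨fun ⟨x, y, h⟩ ↦ ⟨x.natAbs, y.natAbs, by zify; simpa using h⟩,
      fun ⟨x, y, h⟩ ↦ ⟨x, y, by rw [h]; push_cast; ring⟩⟩
  rw [hnat, Nat.eq_sq_add_sq_iff]
  refine ⟨fun h q hq hq4 ↦ ?_, fun h q hmem hq4 ↦ ?_⟩
  · by_cases hmem : q ∈ n.primeFactors
    · rw [factorization_def n hq]
      exact h q hmem hq4
    · rw [← support_factorization, Finsupp.notMem_support_iff] at hmem
      simp [hmem]
  · rw [← factorization_def n (prime_of_mem_primeFactors hmem)]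
    exact h q (prime_of_mem_primeFactors hmem) hq4

lemma exists_int_sq_add_sq_mul_iff {m n : ℕ} (h : m.Coprime n) :
    (∃ x y : ℤ, ((m * n : ℕ) : ℤ) = x ^ 2 + y ^ 2) ↔
      (∃ x y : ℤ, (m : ℤ) = x ^ 2 + y ^ 2) ∧ (∃ x y : ℤ, (n : ℤ) = x ^ 2 + y ^ 2) := by
  simp only [exists_int_sq_add_sq_iff, factorization_mul_of_coprime h, Finsupp.add_apply,
    ← forall_and]
  refine forall_congr' fun q ↦ forall_congr' fun _ ↦ imp_congr_right fun _ ↦ ?_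
  have : m.factorization q = 0 ∨ n.factorization q = 0 := by
    by_contra! h0
    simp only [← Finsupp.mem_support_iff, support_factorization] at h0
    exact Finset.disjoint_left.mp h.disjoint_primeFactors h0.1 h0.2
  rcases this with h0 | h0 <;> simp [h0]

lemma sumTwoSquaresIndicator_one : sumTwoSquaresIndicator 1 = 1 :=
  if_pos ⟨1, 0, by norm_num⟩

lemma sumTwoSquaresIndicator_mul {m n : ℕ} (h : m.Coprime n) :
    sumTwoSquaresIndicator (m * n) = sumTwoSquaresIndicator m * sumTwoSquaresIndicator n := by
  have hiff := exists_int_sq_add_sq_mul_iff h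
  unfold sumTwoSquaresIndicator
  split_ifs <;> grind

lemma sumTwoSquaresIndicator_prime_pow {p : ℕ} (hp : p.Prime) (e : ℕ) :
    sumTwoSquaresIndicator (p ^ e) = if p % 4 = 3 ∧ Odd e then 0 else 1 := by
  have hiff : (∃ x y : ℤ, ((p ^ e : ℕ) : ℤ) = x ^ 2 + y ^ 2) ↔ ¬(p % 4 = 3 ∧ Odd e) := by
    rw [exists_int_sq_add_sq_iff, hp.factorization_pow]
    refine ⟨fun h ⟨h3, hodd⟩ ↦ ?_, fun h q hq hq4 ↦ ?_⟩
    · simpa [Nat.not_even_iff_odd.mpr hodd] using h p hp h3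
    · rw [Finsupp.single_apply]
      grind
  simp only [sumTwoSquaresIndicator, hiff, ite_not]

lemma norm_sumTwoSquaresIndicator_le (n : ℕ) : ‖sumTwoSquaresIndicator n‖ ≤ 1 := by
  unfold sumTwoSquaresIndicator
  split_ifs <;> simp

noncomputable def sumTwoSquaresEulerFactor (p : ℕ) (x : ℂ) : ℂ :=
  if p % 4 = 3 then (1 - x ^ 2)⁻¹ else (1 - x)⁻¹

lemma tsum_sumTwoSquaresIndicator_prime_pow_mul {p : ℕ} (hp : p.Prime) {x : ℂ} (hx : ‖x‖ < 1) :
    ∑' e, sumTwoSquaresIndicator (p ^ e) * x ^ e = sumTwoSquaresEulerFactor p x := by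
  simp only [sumTwoSquaresIndicator_prime_pow hp, sumTwoSquaresEulerFactor]
  by_cases h3 : p % 4 = 3
  · simp [h3, ← Nat.not_even_iff_odd, ← tsum_ite_even_pow hx]
  · simp [h3, tsum_geometric_of_norm_lt_one hx]

theorem LSeries_sumTwoSquaresIndicator_hasProd {s : ℂ} (hs : 1 < s.re) :
    HasProd (fun p : Primes ↦ sumTwoSquaresEulerFactor p ((p : ℂ) ^ (-s)))
      (LSeries sumTwoSquaresIndicator s) := by
  have hsum : LSeriesSummable sumTwoSquaresIndicator s :=
    LSeriesSummable_of_bounded_of_one_lt_re (fun n _ ↦ norm_sumTwoSquaresIndicator_le n) hs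
  convert LSeries_eulerProduct_hasProd sumTwoSquaresIndicator_one sumTwoSquaresIndicator_mul hsum
    using 2 with p
  exact (tsum_sumTwoSquaresIndicator_prime_pow_mul p.prop
    (norm_natCast_cpow_neg_lt_one p.prop.one_lt (by linarith))).symm

lemma sumTwoSquaresEulerFactor_sq {p : ℕ} (hp : p.Prime) (x : ℂ) :
    sumTwoSquaresEulerFactor p x ^ 2 =
      (1 - x)⁻¹ * (1 - ((ZMod.χ₄ p : ℤ) : ℂ) * x)⁻¹ * (if p = 2 then (1 - x)⁻¹ else 1) *
        (if p % 4 = 3 then (1 - x ^ 2)⁻¹ else 1) := by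
  rcases hp.eq_two_or_odd' with rfl | hodd
  · have hχ : ZMod.χ₄ ((2 : ℕ) : ZMod 4) = 0 := by decide
    rw [sumTwoSquaresEulerFactor, if_neg (by decide), hχ, if_pos rfl, if_neg (by decide)]
    push_cast
    ring
  have hp2 : p ≠ 2 := by rintro rfl; exact absurd hodd (by decide)
  obtain h1 | h3 : p % 4 = 1 ∨ p % 4 = 3 := by rcases hodd with ⟨k, rfl⟩; omega
  · rw [sumTwoSquaresEulerFactor, if_neg (by omega), ZMod.χ₄_nat_one_mod_four h1, if_neg hp2,
      if_neg (by omega)]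
    push_cast
    ring
  · have hfactor : (1 - x ^ 2)⁻¹ = (1 - x)⁻¹ * (1 + x)⁻¹ := by rw [← mul_inv]; ring_nf
    rw [sumTwoSquaresEulerFactor, if_pos h3, ZMod.χ₄_nat_three_mod_four h3, if_neg hp2, if_pos h3]
    push_cast
    rw [hfactor]
    ring

theorem lambda_one_sq_eq (s : ℂ) (hs : 1 < s.re) :
    (LSeries sumTwoSquaresIndicator s) ^ 2 =
      riemannZeta s * LSeries (fun n => ((ZMod.χ₄ (n : ZMod 4) : ℤ) : ℂ)) s *
        (1 - (2 : ℂ) ^ (-s))⁻¹ *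
        ∏' p : {p : ℕ // p.Prime ∧ p % 4 = 3}, (1 - (p : ℂ) ^ (-(2 * s)))⁻¹ := by
  have hs2 : 1 < (2 * s).re := by
    simp only [mul_re, re_ofNat, im_ofNat, zero_mul, sub_zero]
    linarith
  have hζ := riemannZeta_eulerProduct_hasProd hs
  have hχ := DirichletCharacter.LSeries_eulerProduct_hasProd
    (ZMod.χ₄.ringHomComp (Int.castRingHom ℂ)) hs
  have htwo := hasProd_single (f := fun p : Primes ↦
    if (p : ℕ) = 2 then (1 - (p : ℂ) ^ (-s))⁻¹ else 1) ⟨2, prime_two⟩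
    fun p hp ↦ if_neg fun h ↦ hp (Subtype.ext h)
  have hthree := hasProd_ite_inv_one_sub_prime_cpow (· % 4 = 3) hs2
  have hf := LSeries_sumTwoSquaresIndicator_hasProd hs
  rw [sq]
  refine (hf.mul hf).unique ?_
  convert ((hζ.mul hχ).mul htwo).mul hthree using 1
  · funext p
    rw [← sq, sumTwoSquaresEulerFactor_sq p.prop, cpow_neg_two_mul]
    rfl
  · simp
end
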